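/- arXiv:0805.4227 — 8 statements merged into one kernel-verified Lean document; each statement's English description precedes it below -/
import Mathlib

section
/- Let n ≥ 1 and N ≥ 1 be integers, let ϖ ∈ R with 0 < v(ϖ) < ∞, and set b = N·v(ϖ)/(p−1). Assume moreover that v(x) = ∞ only for x = 0. Let M be a finitely generated W_n(R)-module and φ_M : M → M an additive map which is semilinear over the Frobenius φ of W_n(R) (i.e. φ_M(a·x) = φ(a)·φ_M(x) for a ∈ W_n(R), x ∈ M) and such that [ϖ]^N·M is contained in the W_n(R)-submodule generated by φ_M(M). Then every W_n(R)-linear map f : M → W_n(R) satisfying f ∘ φ_M = φ ∘ f and f(M) ⊆ [𝔞_R^{>b}] is identically zero. (This is the injectivity part of Proposition 2.1 of the paper, in the abstract form in which it is used: taking M = W_n(R) ⊗_{𝔖_n} 𝔐 for a torsion Kisin module 𝔐 killed by p^n of height ≤ r, with u^N = 0 in W_n[u]/E(u)^r, it yields that the reduction map T_{𝔖_n}(𝔐) → J_{n,b}(𝔐) is injective.) -/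
/-!
Since `M` is finitely generated, `f(M)` lies in `[𝔞^{≥ v(t)}]` for a single `t` with `v(t) > b`.
Applying `f` to `[ϖ]^N M ⊆ ⟨φ_M(M)⟩` and using `f ∘ φ_M = φ ∘ f` and `φ [y] = [y^p]`, induction on
`k` gives `[ϖ]^{N(1 + p + ⋯ + p^{k-1})} f(m) ∈ [𝔞^{≥ p^k v(t)}]`. The `i`-th component of an element
of `[𝔞^{≥ v(t)}]` has valuation `≥ p^i v(t)`, because its image in `W(O)`, for `O` the valuation
ring of the fraction field of `R`, lies in the principal ideal `[t] W(O)`. Hence the `i`-th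
component of `f(m)` has valuation `≥ p^i (p^k (v(t) - b) + b)` for every `k`, so it vanishes.
-/

/-- The Teichmüller representative of `y` in the truncated Witt vector ring `W_n(R)`. -/
noncomputable def truncTeichmuller (p n : ℕ) [hp : Fact p.Prime] {R : Type*} [CommRing R]
    (y : R) : TruncatedWittVector p n R :=
  WittVector.truncate n (WittVector.teichmuller p y)

/-- The Frobenius of `W_n(R)` for `R` of characteristic `p`, given on components by
`(x_0, …, x_{n-1}) ↦ (x_0^p, …, x_{n-1}^p)`. -/
def truncFrobenius (p n : ℕ) {R : Type*} [CommRing R] (x : TruncatedWittVector p n R) :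
    TruncatedWittVector p n R :=
  TruncatedWittVector.mk p fun i => x.coeff i ^ p

/-- The ideal `[𝔞_R^{>c}]` of `W_n(R)`: generated by Teichmüller representatives of
elements of valuation `> c`. -/
noncomputable def idealGT (p n : ℕ) [hp : Fact p.Prime] {R : Type*} [CommRing R]
    (v : R → WithTop ℝ) (c : ℝ) : Ideal (TruncatedWittVector p n R) :=
  Ideal.span {z | ∃ y : R, (c : WithTop ℝ) < v y ∧ z = truncTeichmuller p n y}

noncomputable def AddValuation.extendToFractionRing {R : Type*} [CommRing R] [IsDomain R]
    (v : AddValuation R (WithTop ℝ)) (hv : ∀ x, v x = ⊤ → x = 0) :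
    AddValuation (FractionRing R) (WithTop ℝ) :=
  Valuation.extendToLocalization (S := nonZeroDivisors R) v
    (fun x hx hsupp => nonZeroDivisors.ne_zero hx (hv x hsupp)) (FractionRing R)

theorem AddValuation.extendToFractionRing_algebraMap {R : Type*} [CommRing R] [IsDomain R]
    (v : AddValuation R (WithTop ℝ)) (hv : ∀ x, v x = ⊤ → x = 0) (a : R) :
    v.extendToFractionRing hv (algebraMap R _ a) = v a :=
  Valuation.extendToLocalization_apply_map_apply (v := v) _ _ a

theorem AddValuation.isDomain {R : Type*} [CommRing R] (v : AddValuation R (WithTop ℝ))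
    (hv : ∀ x, v x = ⊤ → x = 0) : IsDomain R := by
  have : Nontrivial R := ⟨1, 0, fun h => by simpa [h] using v.map_one⟩
  have : NoZeroDivisors R := ⟨fun {a b} hab => by
    have h := congrArg v hab
    rw [v.map_mul, v.map_zero, WithTop.add_eq_top] at h
    exact h.imp (hv a) (hv b)⟩
  exact NoZeroDivisors.to_isDomain R

namespace WittVector

variable {p : ℕ} [Fact p.Prime]

local notation "𝕎" => WittVector p

theorem teichmuller_mul_eq_mk_of_invertible {R : Type*} [CommRing R] [Invertible (p : R)]
    (t : R) (z : 𝕎 R) :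
    teichmuller p t * z = mk p fun k => t ^ p ^ k * z.coeff k := by
  refine (ghostMap.bijective_of_invertible p R).1 (funext fun k => ?_)
  rw [map_mul]
  change ghostComponent k (teichmuller p t) * ghostComponent k z = ghostComponent k _
  rw [ghostComponent_teichmuller]
  simp only [ghostComponent_apply, aeval_wittPolynomial, coeff_mk, Finset.mul_sum]
  refine Finset.sum_congr rfl fun i hi => ?_
  rw [mul_pow, ← pow_mul, ← pow_add, Nat.add_sub_cancel' (Finset.mem_range_succ_iff.1 hi)]
  ring

theorem coeff_teichmuller_mul {R : Type*} [CommRing R] (t : R) (z : 𝕎 R) (k : ℕ) :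
    (teichmuller p t * z).coeff k = t ^ p ^ k * z.coeff k := by
  have hℤ : ∀ (t : MvPolynomial R ℤ) (z : 𝕎 (MvPolynomial R ℤ)),
      teichmuller p t * z = mk p fun k => t ^ p ^ k * z.coeff k := fun t z =>
    map_injective (MvPolynomial.map (Int.castRingHom ℚ))
      (MvPolynomial.map_injective _ Int.cast_injective) <| by
      rw [map_mul, map_teichmuller, teichmuller_mul_eq_mk_of_invertible (R := MvPolynomial R ℚ)]
      ext k
      simp only [map_coeff, coeff_mk, map_mul, map_pow]
  obtain ⟨t, rfl⟩ := MvPolynomial.counit_surjective R t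
  obtain ⟨z, rfl⟩ := map_surjective _ (MvPolynomial.counit_surjective R) z
  rw [← map_teichmuller, ← map_mul, hℤ, map_coeff, map_coeff, coeff_mk, map_mul, map_pow]

theorem frobenius_teichmuller {R : Type*} [CommRing R] [CharP R p] (y : R) :
    frobenius (teichmuller p y) = teichmuller p (y ^ p) := by
  rw [frobenius_eq_map_frobenius, map_teichmuller, frobenius_def]

variable {R : Type*} [CommRing R]

variable (p) in
noncomputable def idealGE (v : R → WithTop ℝ) (c : WithTop ℝ) : Ideal (𝕎 R) :=
  Ideal.span (teichmuller p '' {y | c ≤ v y})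

theorem map_frobenius_idealGE_le [CharP R p] (v : AddValuation R (WithTop ℝ)) (t : R) :
    (idealGE p v (v t)).map frobenius ≤ idealGE p v (v (t ^ p)) := by
  rw [idealGE, Ideal.map_span, Ideal.span_le]
  rintro _ ⟨_, ⟨y, hy, rfl⟩, rfl⟩
  refine Ideal.subset_span ⟨y ^ p, ?_, (frobenius_teichmuller y).symm⟩
  simp only [Set.mem_ofPred_eq, AddValuation.map_pow]
  exact nsmul_le_nsmul_right hy p

theorem valuation_pow_le_coeff_of_mem_idealGE [IsDomain R] (v : AddValuation R (WithTop ℝ))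
    (hv : ∀ x, v x = ⊤ → x = 0) (hv_nonneg : ∀ x, 0 ≤ v x) {t : R} {z : 𝕎 R}
    (hz : z ∈ idealGE p v (v t)) (k : ℕ) :
    v (t ^ p ^ k) ≤ v (z.coeff k) := by
  set vK := v.extendToFractionRing hv
  let O : Subring (FractionRing R) := Valuation.integer vK
  have hO : ∀ x, x ∈ O ↔ 0 ≤ vK x := fun x => Iff.rfl
  let ι : R →+* O := (algebraMap R (FractionRing R)).codRestrict O fun x =>
    (hO _).2 (by rw [v.extendToFractionRing_algebraMap]; exact hv_nonneg x)
  have hvι : ∀ x, vK (ι x) = v x := v.extendToFractionRing_algebraMap hv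
  have hdvd : ∀ y, v t ≤ v y → ι t ∣ ι y := by
    intro y hy
    rcases eq_or_ne t 0 with rfl | ht
    · rw [hv y (top_le_iff.1 (v.map_zero ▸ hy)), map_zero]
    have hιt : (ι t : FractionRing R) ≠ 0 :=
      (map_ne_zero_iff _ (IsFractionRing.injective R (FractionRing R))).2 ht
    refine ⟨⟨ι y / ι t, (hO _).2 ?_⟩, Subtype.ext (mul_div_cancel₀ _ hιt).symm⟩
    have hvt : vK (ι t) ≠ ⊤ := fun h => ht (hv t (hvι t ▸ h))
    rw [← add_le_add_iff_left_of_ne_top hvt, zero_add,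
      ← vK.map_mul, div_mul_cancel₀ _ hιt, hvι, hvι]
    exact hy
  have hmem : map ι z ∈ Ideal.span {teichmuller p (ι t)} := by
    rw [← Ideal.mem_comap]
    refine (Ideal.span_le.2 ?_) hz
    rintro _ ⟨y, hy, rfl⟩
    obtain ⟨u, hu⟩ := hdvd y hy
    rw [SetLike.mem_coe, Ideal.mem_comap, map_teichmuller, Ideal.mem_span_singleton, hu, map_mul]
    exact dvd_mul_right _ _
  obtain ⟨a, ha⟩ := Ideal.mem_span_singleton'.1 hmem
  have hcoeff := congrArg (fun x => vK (x.coeff k)) ha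
  simp only [map_coeff, hvι, mul_comm a, coeff_teichmuller_mul, Subring.coe_mul, Subring.coe_pow,
    vK.map_mul, vK.map_pow] at hcoeff
  rw [v.map_pow, ← hcoeff]
  exact le_add_of_nonneg_right (a.coeff k).2

end WittVector

section Truncated

open WittVector (truncate truncate_surjective coeff_truncate)

variable {p n : ℕ} [Fact p.Prime] {R : Type*} [CommRing R]

theorem truncTeichmuller_mul (x y : R) :
    truncTeichmuller p n (x * y) = truncTeichmuller p n x * truncTeichmuller p n y := by
  simp only [truncTeichmuller, map_mul]

theorem truncTeichmuller_pow (x : R) (e : ℕ) :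
    truncTeichmuller p n (x ^ e) = truncTeichmuller p n x ^ e := by
  simp only [truncTeichmuller, map_pow]

theorem coeff_truncTeichmuller_mul (y : R) (z : TruncatedWittVector p n R) (i : Fin n) :
    (truncTeichmuller p n y * z).coeff i = y ^ p ^ (i : ℕ) * z.coeff i := by
  obtain ⟨z, rfl⟩ := truncate_surjective p n R z
  rw [truncTeichmuller, ← map_mul, coeff_truncate, WittVector.coeff_teichmuller_mul,
    coeff_truncate]

theorem truncFrobenius_truncate [CharP R p] (x : WittVector p R) :
    truncFrobenius p n (truncate n x) = truncate n (WittVector.frobenius x) := by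
  ext i
  rw [truncFrobenius, TruncatedWittVector.coeff_mk, coeff_truncate, coeff_truncate,
    WittVector.coeff_frobenius_charP]

theorem truncFrobenius_truncTeichmuller_mul [CharP R p] (y : R) (z : TruncatedWittVector p n R) :
    truncFrobenius p n (truncTeichmuller p n y * z) =
      truncTeichmuller p n (y ^ p) * truncFrobenius p n z := by
  obtain ⟨z, rfl⟩ := truncate_surjective p n R z
  rw [truncTeichmuller, ← map_mul, truncFrobenius_truncate, map_mul,
    WittVector.frobenius_teichmuller, truncFrobenius_truncate, truncTeichmuller, map_mul]

variable (p n) in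
noncomputable def idealGE (v : R → WithTop ℝ) (c : WithTop ℝ) :
    Ideal (TruncatedWittVector p n R) :=
  Ideal.span {z | ∃ y : R, c ≤ v y ∧ z = truncTeichmuller p n y}

theorem idealGE_antitone (v : R → WithTop ℝ) : Antitone (idealGE p n v) := fun _ _ h =>
  Ideal.span_mono fun _ ⟨y, hy, hz⟩ => ⟨y, h.trans hy, hz⟩

theorem idealGE_eq_map_truncate (v : R → WithTop ℝ) (c : WithTop ℝ) :
    idealGE p n v c = (WittVector.idealGE p v c).map (truncate n) := by
  rw [idealGE, WittVector.idealGE, Ideal.map_span, Set.image_image]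
  congr 1
  ext z
  simp [truncTeichmuller, eq_comm]

theorem truncFrobenius_mem_idealGE [CharP R p] (v : AddValuation R (WithTop ℝ)) {t : R}
    {z : TruncatedWittVector p n R} (hz : z ∈ idealGE p n v (v t)) :
    truncFrobenius p n z ∈ idealGE p n v (v (t ^ p)) := by
  rw [idealGE_eq_map_truncate] at hz ⊢
  obtain ⟨z, hz', rfl⟩ := (Ideal.mem_map_iff_of_surjective _ (truncate_surjective p n R)).1 hz
  rw [truncFrobenius_truncate]
  exact Ideal.mem_map_of_mem _
    (WittVector.map_frobenius_idealGE_le v t (Ideal.mem_map_of_mem _ hz'))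

theorem valuation_pow_le_coeff_of_mem_idealGE [IsDomain R] (v : AddValuation R (WithTop ℝ))
    (hv : ∀ x, v x = ⊤ → x = 0) (hv_nonneg : ∀ x, 0 ≤ v x) {t : R}
    {z : TruncatedWittVector p n R} (hz : z ∈ idealGE p n v (v t)) (i : Fin n) :
    v (t ^ p ^ (i : ℕ)) ≤ v (z.coeff i) := by
  rw [idealGE_eq_map_truncate] at hz
  obtain ⟨z, hz', rfl⟩ := (Ideal.mem_map_iff_of_surjective _ (truncate_surjective p n R)).1 hz
  rw [coeff_truncate]
  exact WittVector.valuation_pow_le_coeff_of_mem_idealGE v hv hv_nonneg hz' i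

theorem idealGT_eq_iSup_idealGE (v : R → WithTop ℝ) (b : ℝ) :
    idealGT p n v b = ⨆ t : {t : R // (b : WithTop ℝ) < v t}, idealGE p n v (v t) := by
  simp_rw [idealGT, idealGE, ← Ideal.span_iUnion]
  congr 1
  ext z
  simp only [Set.mem_ofPred_eq, Set.mem_iUnion, Subtype.exists]
  constructor
  · rintro ⟨y, hy, rfl⟩
    exact ⟨y, hy, y, le_rfl, rfl⟩
  · rintro ⟨t, ht, y, hy, rfl⟩
    exact ⟨y, ht.trans_le hy, rfl⟩

theorem exists_le_idealGE_of_fg_of_le_idealGT (v : AddValuation R (WithTop ℝ)) {b : ℝ}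
    {P : Ideal (TruncatedWittVector p n R)} (hP : P.FG) (hPb : P ≤ idealGT p n v b) :
    ∃ t : R, (b : WithTop ℝ) < v t ∧ P ≤ idealGE p n v (v t) := by
  have : Nonempty {t : R // (b : WithTop ℝ) < v t} := ⟨⟨0, by simp⟩⟩
  have hdir : Directed (· ≤ ·)
      fun t : {t : R // (b : WithTop ℝ) < v t} => idealGE p n v (v t) := by
    intro t₁ t₂
    rcases le_total (v t₁) (v t₂) with h | h
    · exact ⟨t₁, le_rfl, idealGE_antitone v h⟩
    · exact ⟨t₂, idealGE_antitone v h, le_rfl⟩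
  rw [idealGT_eq_iSup_idealGE, ← sSup_range] at hPb
  obtain ⟨_, ⟨⟨t, hbt⟩, rfl⟩, hle⟩ :=
    (CompleteLattice.isCompactElement_iff_le_of_directed_sSup_le _ _).1
      ((Submodule.fg_iff_compact P).1 hP) _ (Set.range_nonempty _) (directedOn_range.2 hdir) hPb
  exact ⟨t, hbt, hle⟩

end Truncated

theorem truncTeichmuller_mul_mem_idealGE_of_frobenius {p n : ℕ} [Fact p.Prime] {R : Type*}
    [CommRing R] [CharP R p] (v : AddValuation R (WithTop ℝ)) {M : Type*} [AddCommGroup M]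
    [Module (TruncatedWittVector p n R) M] (φM : M →+ M)
    (f : M →ₗ[TruncatedWittVector p n R] TruncatedWittVector p n R)
    (hfφ : ∀ x : M, f (φM x) = truncFrobenius p n (f x)) (ϖ : R) (N : ℕ)
    (hheight : ∀ m : M, (truncTeichmuller p n ϖ ^ N) • m ∈
      Submodule.span (TruncatedWittVector p n R) (Set.range φM))
    {t : R} (hft : ∀ m, f m ∈ idealGE p n v (v t)) (k : ℕ) (m : M) :
    truncTeichmuller p n (ϖ ^ (N * ∑ j ∈ Finset.range k, p ^ j)) * f m ∈
      idealGE p n v (v (t ^ p ^ k)) := by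
  induction k generalizing m with
  | zero => simpa [truncTeichmuller] using hft m
  | succ k ih =>
    set e := N * ∑ j ∈ Finset.range k, p ^ j
    have he : ϖ ^ (N * ∑ j ∈ Finset.range (k + 1), p ^ j) = (ϖ ^ e) ^ p * ϖ ^ N := by
      rw [geom_sum_succ, ← pow_mul, ← pow_add]
      ring
    have hφ : ∀ u, truncTeichmuller p n ((ϖ ^ e) ^ p) * f (φM u) ∈
        idealGE p n v (v (t ^ p ^ (k + 1))) := fun u => by
      rw [hfφ, ← truncFrobenius_truncTeichmuller_mul, pow_succ, pow_mul]
      exact truncFrobenius_mem_idealGE v (ih u)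
    have hspan : Submodule.span _ (Set.range φM) ≤
        Submodule.comap (truncTeichmuller p n ((ϖ ^ e) ^ p) • f)
          (idealGE p n v (v (t ^ p ^ (k + 1)))) :=
      Submodule.span_le.2 (Set.range_subset_iff.2 hφ)
    have hm := hspan (hheight m)
    rwa [Submodule.mem_comap, LinearMap.smul_apply, f.map_smul, smul_eq_mul, smul_eq_mul,
      ← mul_assoc, ← truncTeichmuller_pow, ← truncTeichmuller_mul, ← he] at hm

open Filter in
theorem eq_top_of_tendsto_of_forall_coe_le_add {x : WithTop ℝ} {a d : ℕ → ℝ}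
    (h : Tendsto (fun k => a k - d k) atTop atTop) (hle : ∀ k, (a k : WithTop ℝ) ≤ d k + x) :
    x = ⊤ := by
  induction x using WithTop.recTopCoe with
  | top => rfl
  | coe ξ =>
    obtain ⟨k, hk⟩ := (h.eventually_gt_atTop ξ).exists
    have hk' := hle k
    norm_cast at hk'
    linarith

theorem eq_zero_of_forall_truncTeichmuller_mul_mem_idealGE {p n : ℕ} [hp : Fact p.Prime]
    {R : Type*} [CommRing R] [IsDomain R] (v : AddValuation R (WithTop ℝ))
    (hv : ∀ x, v x = ⊤ → x = 0) (hv_nonneg : ∀ x, 0 ≤ v x) {N : ℕ} {ϖ : R} {w : ℝ}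
    (hw : v ϖ = w) {b : ℝ} (hb : b = N * w / (p - 1)) {t : R} (hbt : (b : WithTop ℝ) < v t)
    {x : TruncatedWittVector p n R}
    (hx : ∀ k, truncTeichmuller p n (ϖ ^ (N * ∑ j ∈ Finset.range k, p ^ j)) * x ∈
      idealGE p n v (v (t ^ p ^ k))) :
    x = 0 := by
  obtain ⟨γ, hbγ, hγt⟩ := exists_between hbt
  lift γ to ℝ using hγt.ne_top
  ext i
  rw [TruncatedWittVector.coeff_zero]
  refine hv _ (eq_top_of_tendsto_of_forall_coe_le_add
    (a := fun k => ((p ^ k * p ^ (i : ℕ) : ℕ) : ℝ) * γ)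
    (d := fun k => (((N * ∑ j ∈ Finset.range k, p ^ j) * p ^ (i : ℕ) : ℕ) : ℝ) * w) ?_ fun k => ?_)
  · have hp1 : (1 : ℝ) < p := by exact_mod_cast hp.out.one_lt
    have hb' : b * ((p : ℝ) - 1) = N * w := by
      rw [hb, div_mul_cancel₀]
      linarith
    have hsub : ∀ k : ℕ, ((p ^ k * p ^ (i : ℕ) : ℕ) : ℝ) * γ
        - (((N * ∑ j ∈ Finset.range k, p ^ j) * p ^ (i : ℕ) : ℕ) : ℝ) * w
        = (p : ℝ) ^ (i : ℕ) * ((γ - b) * (p : ℝ) ^ k + b) := fun k => by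
      -- `N (1 + p + ⋯ + p^{k-1}) w = b (p^k - 1)`
      push_cast
      linear_combination (p : ℝ) ^ (i : ℕ) *
        ((∑ j ∈ Finset.range k, (p : ℝ) ^ j) * hb' - b * geom_sum_mul (p : ℝ) k)
    simp_rw [hsub]
    refine Filter.Tendsto.const_mul_atTop (by positivity)
      (Filter.tendsto_atTop_add_const_right _ _ ?_)
    exact (tendsto_pow_atTop_atTop_of_one_lt hp1).const_mul_atTop (by simpa using hbγ)
  · have hk := valuation_pow_le_coeff_of_mem_idealGE v hv hv_nonneg (hx k) i
    rw [coeff_truncTeichmuller_mul, ← pow_mul, ← pow_mul, v.map_mul, v.map_pow, v.map_pow] at hk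
    calc ((((p ^ k * p ^ (i : ℕ) : ℕ) : ℝ) * γ : ℝ) : WithTop ℝ)
        = (p ^ k * p ^ (i : ℕ)) • (γ : WithTop ℝ) := by
          rw [← nsmul_eq_mul, WithTop.coe_nsmul]
      _ ≤ (p ^ k * p ^ (i : ℕ)) • v t := nsmul_le_nsmul_right hγt.le _
      _ ≤ _ := hk
      _ = _ := by rw [hw, ← WithTop.coe_nsmul, nsmul_eq_mul]

theorem eq_zero_of_frobenius_compat_of_values_in_idealGT_general
    (p : ℕ) [hp : Fact p.Prime] {R : Type*} [CommRing R] [CharP R p]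
    (v : R → WithTop ℝ)
    (hv0 : v 0 = ⊤)
    (hvmul : ∀ x y : R, v (x * y) = v x + v y)
    (hvadd : ∀ x y : R, min (v x) (v y) ≤ v (x + y))
    (hvnonneg : ∀ x : R, 0 ≤ v x)
    (hvtop : ∀ x : R, v x = ⊤ → x = 0)
    (n N : ℕ)
    (ϖ : R) (w : ℝ) (hw : v ϖ = (w : ℝ))
    (b : ℝ) (hb : b = N * w / (p - 1))
    (M : Type*) [AddCommGroup M] [Module (TruncatedWittVector p n R) M]
    [Module.Finite (TruncatedWittVector p n R) M]
    (φM : M →+ M)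
    (hheight : ∀ m : M, (truncTeichmuller p n ϖ ^ N) • m ∈
      Submodule.span (TruncatedWittVector p n R) (Set.range φM))
    (f : M →ₗ[TruncatedWittVector p n R] TruncatedWittVector p n R)
    (hfφ : ∀ x : M, f (φM x) = truncFrobenius p n (f x))
    (hfb : ∀ x : M, f x ∈ idealGT p n v b) :
    f = 0 := by
  have hv1 : v 1 = 0 := by
    have h := hvmul ϖ 1
    rw [mul_one, hw, ← add_zero (w : WithTop ℝ), add_assoc, zero_add] at h
    exact ((WithTop.add_left_inj WithTop.coe_ne_top).1 h).symm
  let vA := AddValuation.of v hv0 hv1 hvadd hvmul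
  have := vA.isDomain hvtop
  obtain ⟨t, hbt, hft⟩ := exists_le_idealGE_of_fg_of_le_idealGT vA
    (Module.Finite.fg_top.map f) (by rintro _ ⟨m, -, rfl⟩; exact hfb m)
  exact LinearMap.ext fun m =>
    eq_zero_of_forall_truncTeichmuller_mul_mem_idealGE vA hvtop hvnonneg hw hb hbt
      (truncTeichmuller_mul_mem_idealGE_of_frobenius vA φM f hfφ ϖ N hheight
        (fun m => hft ⟨m, trivial, rfl⟩) · m)

theorem eq_zero_of_frobenius_compat_of_values_in_idealGT
    (p : ℕ) [hp : Fact p.Prime] {R : Type*} [CommRing R] [CharP R p] [PerfectRing R p]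
    (v : R → WithTop ℝ)
    (hv0 : v 0 = ⊤)
    (hvmul : ∀ x y : R, v (x * y) = v x + v y)
    (hvadd : ∀ x y : R, min (v x) (v y) ≤ v (x + y))
    (hvnonneg : ∀ x : R, 0 ≤ v x)
    (hvtop : ∀ x : R, v x = ⊤ → x = 0)
    (n N : ℕ) (hn : 1 ≤ n) (hN : 1 ≤ N)
    (ϖ : R) (w : ℝ) (hw : v ϖ = (w : ℝ)) (hw0 : 0 < w)
    (b : ℝ) (hb : b = N * w / (p - 1))
    (M : Type*) [AddCommGroup M] [Module (TruncatedWittVector p n R) M]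
    [Module.Finite (TruncatedWittVector p n R) M]
    (φM : M →+ M)
    (hsemi : ∀ (a : TruncatedWittVector p n R) (x : M),
      φM (a • x) = truncFrobenius p n a • φM x)
    (hheight : ∀ m : M, (truncTeichmuller p n ϖ ^ N) • m ∈
      Submodule.span (TruncatedWittVector p n R) (Set.range φM))
    (f : M →ₗ[TruncatedWittVector p n R] TruncatedWittVector p n R)
    (hfφ : ∀ x : M, f (φM x) = truncFrobenius p n (f x))
    (hfb : ∀ x : M, f x ∈ idealGT p n v b) :
    f = 0 :=
  eq_zero_of_frobenius_compat_of_values_in_idealGT_general p (hp := hp) v hv0 hvmul hvadd hvnonneg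
    hvtop n N ϖ w hw b hb M φM hheight f hfφ hfb
end

section
/- Let E(u) ∈ W[u] be a monic polynomial of degree e ≥ 1 all of whose coefficients other than the leading one lie in pW (for instance an Eisenstein polynomial). Then for all integers n, r ≥ 1, u^N = 0 in W_n[u]/E(u)^r for N = e·p^{n−1}·⌈r/p^{n−1}⌉, where ⌈x⌉ denotes the smallest integer not less than x; i.e. u^{e·p^{n−1}·⌈r/p^{n−1}⌉} lies in the ideal (p^n, E(u)^r) of W[u]. -/
/-!
Every non-leading coefficient of `E` is divisible by `p`, so `E ≡ u^e (mod p)`. Raising a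
congruence modulo `p` to the `p^(n-1)`-th power makes it a congruence modulo `p^n`, hence
`E^(p^(n-1)·c) ≡ u^(e·p^(n-1)·c) (mod p^n)` for every `c`. With `c = ⌈r/p^(n-1)⌉` the exponent
`p^(n-1)·c` is at least `r`, so the left side lies in `(E^r)`.
-/

open Polynomial

theorem Nat.le_mul_ceil_div {K : Type*} [Field K] [LinearOrder K] [IsStrictOrderedRing K]
    [FloorSemiring K] (r : ℕ) {q : ℕ} (hq : 0 < q) : r ≤ q * ⌈(r : K) / q⌉₊ := by
  have hq' : (0 : K) < q := by exact_mod_cast hq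
  have h : (r : K) ≤ q * ⌈(r : K) / q⌉₊ := by
    rw [← div_le_iff₀' hq']
    exact Nat.le_ceil _
  exact_mod_cast h

theorem pow_dvd_sub_pow_pow_pred {R : Type*} [CommRing R] {p : ℕ} {a b : R}
    (h : (p : R) ∣ a - b) (n : ℕ) : (p : R) ^ n ∣ a ^ p ^ (n - 1) - b ^ p ^ (n - 1) := by
  cases n with
  | zero => simp
  | succ m => simpa using dvd_sub_pow_of_dvd_sub h m

theorem Polynomial.Monic.C_dvd_sub_X_pow_natDegree {R : Type*} [CommRing R] {E : R[X]}
    (hmonic : E.Monic) {a : R} (hcoeff : ∀ i < E.natDegree, a ∣ E.coeff i) :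
    C a ∣ E - X ^ E.natDegree := by
  rw [C_dvd_iff_dvd_coeff]
  intro i
  rw [coeff_sub, coeff_X_pow]
  rcases lt_trichotomy i E.natDegree with hi | rfl | hi
  · simpa [hi.ne] using hcoeff i hi
  · simp [hmonic.coeff_natDegree]
  · simp [coeff_eq_zero_of_natDegree_lt hi, hi.ne']

theorem Ideal.mem_span_pair_of_dvd_sub {R : Type*} [CommRing R] {a b x y : R}
    (hxy : a ∣ y - x) (hy : b ∣ y) : x ∈ Ideal.span {a, b} := by
  obtain ⟨s, hs⟩ := hxy
  obtain ⟨t, ht⟩ := hy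
  rw [Ideal.mem_span_pair]
  exact ⟨-s, t, by linear_combination hs - ht⟩

theorem X_pow_mem_span_ceil_general
    (p : ℕ) [hp : Fact p.Prime] (k : Type*) [Field k]
    (e : ℕ)
    (E : Polynomial (WittVector p k)) (hmonic : E.Monic) (hdeg : E.natDegree = e)
    (hcoeff : ∀ i < e, ∃ a : WittVector p k, E.coeff i = (p : WittVector p k) * a)
    (n r : ℕ) :
    (Polynomial.X : Polynomial (WittVector p k)) ^
        (e * p ^ (n - 1) * ⌈(r : ℚ) / (p : ℚ) ^ (n - 1)⌉₊) ∈
      Ideal.span {((p : Polynomial (WittVector p k)) ^ n), E ^ r} := by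
  set q := p ^ (n - 1)
  set c := ⌈(r : ℚ) / (p : ℚ) ^ (n - 1)⌉₊
  have hE : (p : (WittVector p k)[X]) ∣ E - X ^ e := by
    subst hdeg
    simpa using hmonic.C_dvd_sub_X_pow_natDegree (a := (p : WittVector p k)) hcoeff
  have hpow : (p : (WittVector p k)[X]) ^ n ∣ E ^ (q * c) - X ^ (e * q * c) := by
    rw [mul_assoc, pow_mul E, pow_mul X, pow_mul (X ^ e)]
    exact (pow_dvd_sub_pow_pow_pred hE n).trans (sub_dvd_pow_sub_pow _ _ c)
  have hrc : r ≤ q * c := by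
    simpa [q, c] using Nat.le_mul_ceil_div (K := ℚ) r (pow_pos hp.out.pos (n - 1))
  exact Ideal.mem_span_pair_of_dvd_sub hpow (pow_dvd_pow E hrc)

theorem X_pow_mem_span_ceil
    (p : ℕ) [hp : Fact p.Prime] (k : Type*) [Field k] [CharP k p] [PerfectRing k p]
    (e : ℕ) (he : 1 ≤ e)
    (E : Polynomial (WittVector p k)) (hmonic : E.Monic) (hdeg : E.natDegree = e)
    (hcoeff : ∀ i < e, ∃ a : WittVector p k, E.coeff i = (p : WittVector p k) * a)
    (n r : ℕ) (hn : 1 ≤ n) (hr : 1 ≤ r) :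
    (Polynomial.X : Polynomial (WittVector p k)) ^
        (e * p ^ (n - 1) * ⌈(r : ℚ) / (p : ℚ) ^ (n - 1)⌉₊) ∈
      Ideal.span {((p : Polynomial (WittVector p k)) ^ n), E ^ r} :=
  X_pow_mem_span_ceil_general p (hp := hp) k e E hmonic hdeg hcoeff n r
end

section
/- Let E(u) ∈ W[u] be an Eisenstein polynomial of degree e ≥ 1 (monic, all non-leading coefficients in pW, constant coefficient not in p²W); it is the minimal polynomial of a uniformizer of a totally ramified extension K of W[1/p] of degree e. Then there exists a constant c ∈ ℕ, depending only on E (equivalently only on K), such that for all integers n, r ≥ 1, u^N = 0 in W_n[u]/E(u)^r for N = en + c(r−1); i.e. u^{en + c(r−1)} lies in the ideal (p^n, E(u)^r) of W[u]. -/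
/-!
Since `E` is monic of degree `e` with all lower coefficients divisible by `p`, `u^e ≡ E (mod p)`,
so `u^e = E + p F`. Expanding `(E + p F)^(n + r - 1)` binomially, every term contains `E^r` or
`p^n`; hence `c = e` works.
-/

open Polynomial

theorem Polynomial.Monic.C_dvd_X_pow_natDegree_sub {R : Type*} [CommRing R] {E : R[X]}
    (hE : E.Monic) {a : R} (ha : ∀ i < E.natDegree, a ∣ E.coeff i) :
    C a ∣ X ^ E.natDegree - E := by
  rw [C_dvd_iff_dvd_coeff]
  intro i
  rcases lt_trichotomy i E.natDegree with hi | rfl | hi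
  · simpa [coeff_X_pow, hi.ne] using (ha i hi).neg_right
  · simp [hE.coeff_natDegree]
  · simp [coeff_X_pow, hi.ne', coeff_eq_zero_of_natDegree_lt hi]

theorem pow_add_pred_mem_span_pow_pow_of_dvd_sub {S : Type*} [CommRing S] {a b c : S}
    (h : a ∣ b - c) (m n : ℕ) : b ^ (m + n - 1) ∈ Ideal.span {a ^ n, c ^ m} := by
  have hc : c ^ m ∈ Ideal.span {a ^ n, c ^ m} := Ideal.subset_span (by simp)
  have hbc : (b - c) ^ n ∈ Ideal.span {a ^ n, c ^ m} :=
    Ideal.mem_of_dvd _ (pow_dvd_pow_of_dvd h n) (Ideal.subset_span (by simp))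
  simpa using (Ideal.span {a ^ n, c ^ m}).add_pow_add_pred_mem_of_pow_mem hc hbc

theorem exists_const_X_pow_mem_span_general
    (p : ℕ) [hp : Fact p.Prime] (k : Type*) [Field k]
    (e : ℕ)
    (E : Polynomial (WittVector p k)) (hmonic : E.Monic) (hdeg : E.natDegree = e)
    (hcoeff : ∀ i < e, ∃ a : WittVector p k, E.coeff i = (p : WittVector p k) * a) :
    ∃ c : ℕ, ∀ n r : ℕ, 1 ≤ n → 1 ≤ r →
      (Polynomial.X : Polynomial (WittVector p k)) ^ (e * n + c * (r - 1)) ∈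
        Ideal.span {((p : Polynomial (WittVector p k)) ^ n), E ^ r} := by
  subst hdeg
  have hdvd : (p : (WittVector p k)[X]) ∣ X ^ E.natDegree - E := by
    simpa using hmonic.C_dvd_X_pow_natDegree_sub hcoeff
  refine ⟨E.natDegree, fun n r _ hr => ?_⟩
  have hexp : E.natDegree * n + E.natDegree * (r - 1) = E.natDegree * (r + n - 1) := by
    rw [← mul_add]
    congr 1
    omega
  rw [hexp, pow_mul]
  exact pow_add_pred_mem_span_pow_pow_of_dvd_sub hdvd r n

theorem exists_const_X_pow_mem_span
    (p : ℕ) [hp : Fact p.Prime] (k : Type*) [Field k] [CharP k p] [PerfectRing k p]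
    (e : ℕ) (he : 1 ≤ e)
    (E : Polynomial (WittVector p k)) (hmonic : E.Monic) (hdeg : E.natDegree = e)
    (hcoeff : ∀ i < e, ∃ a : WittVector p k, E.coeff i = (p : WittVector p k) * a)
    (heis : ¬ ∃ a : WittVector p k, E.coeff 0 = (p : WittVector p k) ^ 2 * a) :
    ∃ c : ℕ, ∀ n r : ℕ, 1 ≤ n → 1 ≤ r →
      (Polynomial.X : Polynomial (WittVector p k)) ^ (e * n + c * (r - 1)) ∈
        Ideal.span {((p : Polynomial (WittVector p k)) ^ n), E ^ r} :=
  exists_const_X_pow_mem_span_general p (hp := hp) k e E hmonic hdeg hcoeff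
end

section
/- Let c > 0 be a real number and s ≥ 0 an integer such that p^s·v(p) > c. Then θ_s induces a ring isomorphism R/{x ∈ R : v_R(x) > c} ≅ O/{x ∈ O : v(x) > c/p^s}. Precisely: since v(p) > c/p^s, the ideal 𝔞 = {x ∈ O : v(x) > c/p^s} of O contains p, so the projection O/p → O/𝔞 is defined; the composite R →(θ_s) O/p → O/𝔞 is a surjective ring homomorphism whose kernel is exactly {x ∈ R : v_R(x) > c}. -/
/-!
Statement 8 (Lemma 2.8 of Caruso–Liu).  `K` is an algebraically closed field with an
additive valuation `v` with `0 < v p < ∞`, `O` its valuation ring, `R = lim_{x↦x^p} O/p`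
the tilt with its valuation `v_R`, and `θ_s : R → O/p` the `s`-th projection.  If
`p^s·v(p) > c > 0` then `θ_s` induces a ring isomorphism
`R/{v_R > c} ≅ O/{v > c/p^s}`: the composite `R → O/p → O/𝔞` (with
`𝔞 = {x ∈ O : v x > c/p^s} ∋ p`) is a surjective ring homomorphism with kernel
`{x ∈ R : v_R x > c}`.
-/

noncomputable section

/-- The axioms for an additive valuation on a field `K`, with `0 < v p < ∞`. -/
structure ValAx (p : ℕ) (K : Type*) [Field K] (v : K → WithTop ℝ) : Prop where
  map_mul : ∀ x y : K, v (x * y) = v x + v y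
  min_le_map_add : ∀ x y : K, min (v x) (v y) ≤ v (x + y)
  top_iff : ∀ x : K, v x = ⊤ ↔ x = 0
  vp_pos : 0 < v (p : K)
  vp_ne_top : v (p : K) ≠ ⊤

namespace Tilt

variable {p : ℕ} {K : Type*} [Field K] {v : K → WithTop ℝ}

theorem v_one_eq_zero (hv : ValAx p K v) : v 1 = 0 := by
  have h : v 1 = v 1 + v 1 := by
    conv_lhs => rw [show (1 : K) = 1 * 1 by ring]
    exact hv.map_mul 1 1
  have hne : v 1 ≠ ⊤ := fun h' => one_ne_zero ((hv.top_iff 1).1 h')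
  obtain ⟨r, hr⟩ := WithTop.ne_top_iff_exists.mp hne
  rw [← hr] at h
  rw [← hr]
  norm_cast at h ⊢
  linarith

theorem v_neg (hv : ValAx p K v) (x : K) : v (-x) = v x := by
  have hm1 : v (-1 : K) = 0 := by
    have h : v (-1 : K) + v (-1 : K) = 0 := by
      rw [← hv.map_mul]; norm_num [v_one_eq_zero hv]
    rcases eq_or_ne (v (-1 : K)) ⊤ with h' | h'
    · rw [h'] at h; simp at h
    · obtain ⟨r, hr⟩ := WithTop.ne_top_iff_exists.mp h'
      rw [← hr] at h ⊢; norm_cast at h ⊢; linarith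
  calc v (-x) = v ((-1) * x) := by ring_nf
  _ = v (-1 : K) + v x := hv.map_mul _ _
  _ = v x := by rw [hm1, zero_add]

/-- The valuation ring `O = {x ∈ K : v x ≥ 0}`. -/
def O (p : ℕ) (v : K → WithTop ℝ) (hv : ValAx p K v) : Subring K where
  carrier := {x | 0 ≤ v x}
  one_mem' := le_of_eq (v_one_eq_zero hv).symm
  mul_mem' := fun {x y} hx hy => by
    simpa only [Set.mem_setOf_eq, hv.map_mul] using add_nonneg hx hy
  zero_mem' := by simp only [Set.mem_setOf_eq, (hv.top_iff 0).2 rfl]; exact le_top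
  add_mem' := fun {x y} hx hy => le_trans (le_min hx hy) (hv.min_le_map_add x y)
  neg_mem' := fun {x} hx => by simpa only [Set.mem_setOf_eq, v_neg hv] using hx

/-- The ideal `pO` of `O`. -/
def pIdeal (p : ℕ) (v : K → WithTop ℝ) (hv : ValAx p K v) : Ideal (O p v hv) :=
  Ideal.span {(p : O p v hv)}

theorem pIdeal_ne_top (hv : ValAx p K v) : pIdeal p v hv ≠ ⊤ := by
  intro h
  rw [Ideal.eq_top_iff_one, pIdeal, Ideal.mem_span_singleton] at h
  obtain ⟨a, ha⟩ := h
  have ha' : (1 : K) = (p : K) * (a : K) := by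
    have := congrArg (fun z : O p v hv => (z : K)) ha
    push_cast at this
    exact this
  have h0 : (0 : WithTop ℝ) = v ((p : K) * (a : K)) := by
    rw [← ha', v_one_eq_zero hv]
  rw [hv.map_mul] at h0
  have : (0 : WithTop ℝ) < v (p : K) + v (a : K) :=
    lt_of_lt_of_le hv.vp_pos (le_add_of_nonneg_right a.2)
  rw [← h0] at this
  exact lt_irrefl _ this

theorem charP_quotient (hv : ValAx p K v) [Fact p.Prime] :
    CharP (O p v hv ⧸ pIdeal p v hv) p := by
  haveI : Nontrivial (O p v hv ⧸ pIdeal p v hv) :=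
    Ideal.Quotient.nontrivial_iff.mpr (pIdeal_ne_top hv)
  refine (CharP.charP_iff_prime_eq_zero Fact.out).2 ?_
  rw [← map_natCast (Ideal.Quotient.mk (pIdeal p v hv))]
  exact Ideal.Quotient.eq_zero_iff_mem.2 (Ideal.mem_span_singleton_self _)

/-- The tilt `R = lim_{x ↦ x^p} O/p`, as a subring of the product ring
`ℕ → O/p`: sequences `(x⁽⁰⁾, x⁽¹⁾, …)` with `(x⁽ˢ⁺¹⁾)^p = x⁽ˢ⁾`. -/
def tilt (p : ℕ) [Fact p.Prime] (v : K → WithTop ℝ) (hv : ValAx p K v) :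
    Subring (ℕ → (O p v hv ⧸ pIdeal p v hv)) where
  carrier := {f | ∀ s : ℕ, f (s + 1) ^ p = f s}
  one_mem' := fun s => one_pow p
  mul_mem' := fun {f g} hf hg s => by
    simp only [Pi.mul_apply, mul_pow, hf s, hg s]
  zero_mem' := fun s => zero_pow (Fact.out (p := p.Prime)).ne_zero
  add_mem' := fun {f g} hf hg s => by
    haveI := charP_quotient hv
    simp only [Pi.add_apply, add_pow_char, hf s, hg s]
  neg_mem' := fun {f} hf s => by
    haveI := charP_quotient hv
    rw [Pi.neg_apply, Pi.neg_apply, show -f (s + 1) = -1 * f (s + 1) by ring, mul_pow,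
      neg_one_pow_char, hf s]
    ring

variable (p) [Fact p.Prime] (v)

/-- The `s`-th projection `θ_s : R → O/p`, `x ↦ x⁽ˢ⁾`. -/
def theta (hv : ValAx p K v) (s : ℕ) :
    tilt p v hv →+* (O p v hv ⧸ pIdeal p v hv) :=
  (Pi.evalRingHom _ s).comp (tilt p v hv).subtype

/-- The valuation `v_R` of the tilt: `v_R x = lim_s p^s · v(x̂⁽ˢ⁾)` where `x̂⁽ˢ⁾` is any
lift of `x⁽ˢ⁾` to `O` (the sequence `p^s · min (v x̂⁽ˢ⁾) (v p)` is nondecreasing and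
independent of the choice of lifts, and its limit is its supremum). -/
def vR (hv : ValAx p K v) (x : tilt p v hv) : WithTop ℝ :=
  ⨆ s : ℕ, ((((p : ℝ) ^ s : ℝ)) : WithTop ℝ) *
    min (v ((Function.surjInv Ideal.Quotient.mk_surjective (x.val s) : O p v hv) : K))
        (v (p : K))

/-- The ideal `𝔞 = {x ∈ O : v x > t}` of `O`. -/
def oIdealGT (hv : ValAx p K v) (t : ℝ) : Ideal (O p v hv) where
  carrier := {x | (t : WithTop ℝ) < v ↑x}
  add_mem' := fun {x y} hx hy =>
    lt_of_lt_of_le (lt_min hx hy) (by push_cast; exact hv.min_le_map_add x y)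
  zero_mem' := by
    show (t : WithTop ℝ) < v ((0 : O p v hv) : K)
    push_cast
    rw [(hv.top_iff 0).2 rfl]
    exact WithTop.coe_lt_top t
  smul_mem' := fun a x hx => by
    show (t : WithTop ℝ) < v ((a * x : O p v hv) : K)
    push_cast
    rw [hv.map_mul]
    exact lt_of_lt_of_le hx (le_add_of_nonneg_left a.2)

/-- Since `v p > c/p^s`, the ideal `𝔞 = {v > c/p^s}` contains `p`,
so `pO ≤ 𝔞` and the projection `O/p → O/𝔞` is defined. -/
theorem pIdeal_le_oIdealGT (hv : ValAx p K v) (c : ℝ) (s : ℕ)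
    (hs : (c : WithTop ℝ) < (((p : ℝ) ^ s : ℝ) : WithTop ℝ) * v (p : K)) :
    pIdeal p v hv ≤ oIdealGT p v hv (c / p ^ s) := by
  rw [pIdeal, Ideal.span_le, Set.singleton_subset_iff]
  show ((c / p ^ s : ℝ) : WithTop ℝ) < v ((p : O p v hv) : K)
  push_cast
  rcases eq_or_ne (v (p : K)) ⊤ with h | h
  · rw [h]; exact WithTop.coe_lt_top _
  · obtain ⟨w, hw⟩ := WithTop.ne_top_iff_exists.mp h
    rw [← hw] at hs ⊢
    have hps : (0 : ℝ) < (p : ℝ) ^ s := by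
      have : (0 : ℝ) < (p : ℝ) := by
        exact_mod_cast (Fact.out (p := p.Prime)).pos
      positivity
    have hs' : c < (p : ℝ) ^ s * w := by exact_mod_cast hs
    have hgoal : c / (p : ℝ) ^ s < w := (div_lt_iff₀ hps).2 (by linarith)
    exact_mod_cast hgoal

end Tilt

/-!
Write `mₙ = min (v x̂⁽ⁿ⁾) (v p)`. Since `(x̂⁽ⁿ⁺¹⁾)^p ≡ x̂⁽ⁿ⁾ mod p`, the truncated valuations
satisfy `mₙ = min (p·mₙ₊₁) (v p)`, hence `pˢ·mₛ = min (pⁿ·mₙ) (pˢ·v p)` for `n ≥ s`. So `pⁿ·mₙ`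
increases to `v_R x`, and as `c < pˢ·v p`, `v_R x > c` iff `pˢ·mₛ > c` iff `v x̂⁽ˢ⁾ > c/pˢ`.
Surjectivity holds because `O` contains all `p`-th roots of its elements, `K` being
algebraically closed.
-/

theorem pow_mul_eq_min_of_forall_eq_min {q w : ℝ} {m : ℕ → ℝ} (hq : 1 ≤ q) (hw : 0 ≤ w)
    (hm : ∀ n, m n = min (q * m (n + 1)) w) {s n : ℕ} (hsn : s ≤ n) :
    q ^ s * m s = min (q ^ n * m n) (q ^ s * w) := by
  have hq0 : 0 ≤ q := zero_le_one.trans hq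
  induction n, hsn using Nat.le_induction with
  | base =>
    have hms : m s ≤ w := (hm s).trans_le (min_le_right _ _)
    exact (min_eq_left (mul_le_mul_of_nonneg_left hms (pow_nonneg hq0 s))).symm
  | succ n hsn ih =>
    have hpow : q ^ s * w ≤ q ^ n * w :=
      mul_le_mul_of_nonneg_right (pow_le_pow_right₀ hq hsn) hw
    rw [ih, hm n, mul_min_of_nonneg _ _ (pow_nonneg hq0 n), min_assoc, min_eq_right hpow,
      ← mul_assoc, ← pow_succ]

theorem lt_pow_mul_iff_exists_of_forall_eq_min {q w c : ℝ} {m : ℕ → ℝ} (hq : 1 ≤ q)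
    (hw : 0 ≤ w) (hm : ∀ n, m n = min (q * m (n + 1)) w) {s : ℕ} (hc : c < q ^ s * w) :
    c < q ^ s * m s ↔ ∃ n, c < q ^ n * m n := by
  refine ⟨fun h => ⟨s, h⟩, fun ⟨n, hn⟩ => ?_⟩
  have hmono : q ^ n * m n ≤ q ^ max n s * m (max n s) := by
    rw [pow_mul_eq_min_of_forall_eq_min hq hw hm (le_max_left n s)]
    exact min_le_left _ _
  rw [pow_mul_eq_min_of_forall_eq_min hq hw hm (le_max_right n s)]
  exact lt_min (hn.trans_le hmono) hc

theorem exists_pow_seq_eq {M : Type*} [Monoid M] {q : ℕ} (hroot : ∀ b : M, ∃ r, r ^ q = b)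
    (a : M) (s : ℕ) : ∃ r : ℕ → M, r s = a ∧ ∀ n, r (n + 1) ^ q = r n := by
  induction s with
  | zero =>
    choose f hf using hroot
    exact ⟨fun n => f^[n] a, rfl, fun n => by simp only [Function.iterate_succ_apply', hf]⟩
  | succ s ih =>
    obtain ⟨r, hrs, hr⟩ := ih
    exact ⟨fun | 0 => r 0 ^ q | n + 1 => r n, hrs, fun | 0 => rfl | n + 1 => hr n⟩

namespace ValAx

variable {p : ℕ} {K : Type*} [Field K] {v : K → WithTop ℝ}

theorem map_pow (hv : ValAx p K v) (a : K) (n : ℕ) : v (a ^ n) = n • v a := by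
  induction n with
  | zero => simpa using Tilt.v_one_eq_zero hv
  | succ n ih => rw [pow_succ, hv.map_mul, ih, succ_nsmul]

theorem min_eq_min_of_le_map_sub (hv : ValAx p K v) {a b : K} {t : WithTop ℝ}
    (h : t ≤ v (a - b)) : min (v a) t = min (v b) t := by
  have key : ∀ a b : K, t ≤ v (a - b) → min (v b) t ≤ min (v a) t := fun a b h =>
    le_min ((min_le_min_left _ h).trans
      (by simpa using hv.min_le_map_add b (a - b))) (min_le_right _ _)
  refine le_antisymm (key b a ?_) (key a b h)
  rwa [← neg_sub, Tilt.v_neg hv]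

end ValAx

namespace Tilt

variable {p : ℕ} {K : Type*} [Field K] {v : K → WithTop ℝ}

theorem le_map_of_mem_pIdeal (hv : ValAx p K v) {a : O p v hv} (ha : a ∈ pIdeal p v hv) :
    v (p : K) ≤ v a := by
  obtain ⟨u, rfl⟩ := Ideal.mem_span_singleton'.1 ha
  rw [Subring.coe_mul, hv.map_mul, Subring.coe_natCast]
  exact le_add_of_nonneg_left u.2

theorem exists_pow_eq_of_isAlgClosed [IsAlgClosed K] (hv : ValAx p K v) {n : ℕ} (hn : n ≠ 0)
    (b : O p v hv) : ∃ r : O p v hv, r ^ n = b := by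
  obtain ⟨r, hr⟩ := IsAlgClosed.exists_pow_nat_eq (b : K) (Nat.pos_of_ne_zero hn)
  have hvr : 0 ≤ v r := by
    rw [← nsmul_nonneg_iff hn, ← hv.map_pow, hr]
    exact b.2
  exact ⟨⟨r, hvr⟩, Subtype.ext (by simpa using hr)⟩

def valP (hv : ValAx p K v) : ℝ := (v (p : K)).untop hv.vp_ne_top

theorem coe_valP (hv : ValAx p K v) : (valP hv : WithTop ℝ) = v (p : K) :=
  WithTop.coe_untop _ _

theorem valP_pos (hv : ValAx p K v) : 0 < valP hv := by
  simpa [← coe_valP hv] using hv.vp_pos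

/-- The valuation truncated at `v p`, which is all that is visible modulo `p`. -/
def truncVal (hv : ValAx p K v) (a : K) : ℝ :=
  (min (v a) (v (p : K))).untop (ne_top_of_le_ne_top hv.vp_ne_top (min_le_right _ _))

theorem coe_truncVal (hv : ValAx p K v) (a : K) :
    (truncVal hv a : WithTop ℝ) = min (v a) (v (p : K)) :=
  WithTop.coe_untop _ _

theorem truncVal_eq_of_le_map_sub (hv : ValAx p K v) {a b : K} (h : v (p : K) ≤ v (a - b)) :
    truncVal hv a = truncVal hv b := by
  rw [← WithTop.coe_inj, coe_truncVal, coe_truncVal, hv.min_eq_min_of_le_map_sub h]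

theorem truncVal_pow (hv : ValAx p K v) (a : K) {n : ℕ} (hn : n ≠ 0) :
    truncVal hv (a ^ n) = min (n * truncVal hv a) (valP hv) := by
  rw [← WithTop.coe_inj, coe_truncVal, WithTop.coe_min, coe_valP, ← nsmul_eq_mul,
    WithTop.coe_nsmul, coe_truncVal, (nsmul_right_mono n).map_min, min_assoc,
    min_eq_right (le_self_nsmul hv.vp_pos.le hn), hv.map_pow]

theorem lt_truncVal_iff (hv : ValAx p K v) {a : K} {t : ℝ} (ht : t < valP hv) :
    t < truncVal hv a ↔ (t : WithTop ℝ) < v a := by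
  rw [← WithTop.coe_lt_coe, coe_truncVal, lt_min_iff, ← coe_valP hv, WithTop.coe_lt_coe,
    and_iff_left ht]

variable [Fact p.Prime]

/-- The lift to `O` of the `n`-th component of `x`, as chosen in the definition of `vR`. -/
def liftSeq (hv : ValAx p K v) (x : tilt p v hv) (n : ℕ) : O p v hv :=
  Function.surjInv Ideal.Quotient.mk_surjective (x.val n)

theorem mk_liftSeq (hv : ValAx p K v) (x : tilt p v hv) (n : ℕ) :
    Ideal.Quotient.mk (pIdeal p v hv) (liftSeq hv x n) = x.val n :=
  Function.surjInv_eq _ _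

theorem truncVal_liftSeq (hv : ValAx p K v) (x : tilt p v hv) (n : ℕ) :
    truncVal hv (liftSeq hv x n) = min (p * truncVal hv (liftSeq hv x (n + 1))) (valP hv) := by
  have hp : p ≠ 0 := (Fact.out : p.Prime).ne_zero
  rw [← truncVal_pow hv _ hp, ← Subring.coe_pow]
  refine truncVal_eq_of_le_map_sub hv ?_
  rw [← AddSubgroupClass.coe_sub]
  refine le_map_of_mem_pIdeal hv ?_
  rw [← Ideal.Quotient.eq_zero_iff_mem, map_sub, map_pow, mk_liftSeq, mk_liftSeq, x.2 n,
    sub_self]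

theorem lt_vR_iff (hv : ValAx p K v) (x : tilt p v hv) (c : ℝ) :
    (c : WithTop ℝ) < vR p v hv x ↔ ∃ n, c < p ^ n * truncVal hv (liftSeq hv x n) := by
  have hvR : vR p v hv x = ⨆ n, ((p ^ n * truncVal hv (liftSeq hv x n) : ℝ) : WithTop ℝ) := by
    simp only [WithTop.coe_mul, coe_truncVal]
    rfl
  simp only [hvR, lt_ciSup_iff (OrderTop.bddAbove _), WithTop.coe_lt_coe]

theorem theta_surjective [IsAlgClosed K] (hv : ValAx p K v) (s : ℕ) :
    Function.Surjective (theta p v hv s) := by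
  intro y
  obtain ⟨a, rfl⟩ := Ideal.Quotient.mk_surjective y
  obtain ⟨r, hrs, hr⟩ :=
    exists_pow_seq_eq (exists_pow_eq_of_isAlgClosed hv (Fact.out : p.Prime).ne_zero) a s
  exact ⟨⟨fun n => Ideal.Quotient.mk _ (r n), fun n => by rw [← map_pow, hr]⟩,
    congrArg _ hrs⟩

theorem factor_comp_theta_eq_zero_iff (hv : ValAx p K v) (c : ℝ) (s : ℕ)
    (hs : (c : WithTop ℝ) < (((p : ℝ) ^ s : ℝ) : WithTop ℝ) * v (p : K)) (x : tilt p v hv) :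
    (Ideal.Quotient.factor (pIdeal_le_oIdealGT p v hv c s hs)).comp (theta p v hv s) x = 0 ↔
      (c : WithTop ℝ) < vR p v hv x := by
  have hp : (1 : ℝ) ≤ p := by exact_mod_cast (Fact.out : p.Prime).one_lt.le
  have hps : (0 : ℝ) < p ^ s := by positivity
  have hcs : c < p ^ s * valP hv := by
    rwa [← coe_valP hv, ← WithTop.coe_mul, WithTop.coe_lt_coe] at hs
  have hθ : theta p v hv s x = Ideal.Quotient.mk _ (liftSeq hv x s) := (mk_liftSeq hv x s).symm
  rw [RingHom.comp_apply, hθ, Ideal.Quotient.factor_mk, Ideal.Quotient.eq_zero_iff_mem,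
    lt_vR_iff, ← lt_pow_mul_iff_exists_of_forall_eq_min hp (valP_pos hv).le
      (truncVal_liftSeq hv x) hcs, ← div_lt_iff₀' hps,
    lt_truncVal_iff hv ((div_lt_iff₀' hps).2 hcs)]
  rfl

theorem theta_surjective_and_ker_general (K : Type*) [Field K] [IsAlgClosed K]
    (p : ℕ) [Fact p.Prime] (v : K → WithTop ℝ) (hv : ValAx p K v)
    (c : ℝ) (s : ℕ)
    (hs : (c : WithTop ℝ) < (((p : ℝ) ^ s : ℝ) : WithTop ℝ) * v (p : K)) :
    Function.Surjective
      ((Ideal.Quotient.factor (pIdeal_le_oIdealGT p v hv c s hs)).comp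
        (theta p v hv s)) ∧
    ∀ x : tilt p v hv,
      ((Ideal.Quotient.factor (pIdeal_le_oIdealGT p v hv c s hs)).comp
        (theta p v hv s)) x = 0 ↔ (c : WithTop ℝ) < vR p v hv x :=
  ⟨(Ideal.Quotient.factor_surjective (pIdeal_le_oIdealGT p v hv c s hs)).comp (theta_surjective hv s),
    factor_comp_theta_eq_zero_iff hv c s hs⟩

/-- For `p^s · v(p) > c`, the composite
`R → O/p → O/𝔞` (`𝔞 = {x ∈ O : v x > c/p^s}`) is a surjective ring homomorphism
with kernel `{x ∈ R : v_R x > c}`; hence it induces a ring isomorphism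
`R/{v_R > c} ≅ O/{v > c/p^s}`. -/
theorem theta_surjective_and_ker (K : Type*) [Field K] [IsAlgClosed K]
    (p : ℕ) [Fact p.Prime] (v : K → WithTop ℝ) (hv : ValAx p K v)
    (c : ℝ) (hc : 0 < c) (s : ℕ)
    (hs : (c : WithTop ℝ) < (((p : ℝ) ^ s : ℝ) : WithTop ℝ) * v (p : K)) :
    Function.Surjective
      ((Ideal.Quotient.factor (pIdeal_le_oIdealGT p v hv c s hs)).comp
        (theta p v hv s)) ∧
    ∀ x : tilt p v hv,
      ((Ideal.Quotient.factor (pIdeal_le_oIdealGT p v hv c s hs)).comp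
        (theta p v hv s)) x = 0 ↔ (c : WithTop ℝ) < vR p v hv x :=
  theta_surjective_and_ker_general K p v hv c s hs

end Tilt
end
end

section
/- Let ζ ∈ O be a primitive p-th root of unity (ζ^p = 1, ζ ≠ 1), and assume v(ζ − 1) = v(p)/(p − 1) (which holds automatically in the ring of integers of an algebraic closure of a p-adic field). Let a ∈ O be nonzero. Then the components (x_0, x_1, x_2, …) of the Witt vector [ζ·a] − [a] ∈ W(O) satisfy v(x_i) = v(ζ − 1) + p^i·v(a) for every i ≥ 0. (This is the key computation in the proof of Proposition 2.10 of the paper, showing that G_s fixes the class of [π_{s'}] modulo [𝔞^{>c/p^{s'}}].) -/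
/-!
The ghost components of `x = [ζa] - [a]` are `(ζa)^{p^n} - a^{p^n}`, which vanish for `n ≥ 1`
since `ζ^p = 1`, while `x₀ = (ζ - 1) a`. Writing `e = v(ζ - 1)`, so that `v(p) = (p - 1) e`, the
vanishing of the `(n + 1)`-st ghost component reads
`p^{n+1} x_{n+1} = -∑_{i ≤ n} p^i x_i^{p^{n+1-i}}`, and by induction the term `i = n` has strictly
the smallest valuation, namely `(p - 1) e n + p (e + p^n v(a))`. Solving for `v(x_{n+1})` gives
`e + p^{n+1} v(a)`.
-/

open WittVector Finset

theorem add_mul_sub_one_lt_pow_succ {p : ℝ} (hp : 1 < p) {k : ℕ} (hk : 1 ≤ k) :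
    p + k * (p - 1) < p ^ (k + 1) := by
  have bernoulli := one_add_mul_le_pow (a := p - 1) (by linarith) k
  rw [add_sub_cancel] at bernoulli
  have hk' : (1 : ℝ) ≤ k := by exact_mod_cast hk
  rw [pow_succ]
  nlinarith [mul_pos (sub_pos.2 hp) (sub_pos.2 hp)]

theorem WithTop.eq_coe_sub_of_coe_add_eq {a b : ℝ} {y : WithTop ℝ}
    (h : (a : WithTop ℝ) + y = b) : y = ((b - a : ℝ) : WithTop ℝ) := by
  obtain ⟨a', b', ha, rfl, rfl⟩ := WithTop.add_eq_coe.mp h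
  rw [WithTop.coe_inj.mp ha, add_sub_cancel_left]

namespace AddValuation

variable {R : Type*} [CommRing R] (v : AddValuation R (WithTop ℝ))

theorem map_pow_of_eq_coe {x : R} {r : ℝ} (hx : v x = r) (n : ℕ) :
    v (x ^ n) = ((n * r : ℝ) : WithTop ℝ) := by
  rw [v.map_pow, hx, ← WithTop.coe_nsmul, nsmul_eq_mul]

theorem map_sum_range_succ_of_lt {f : ℕ → R} {n : ℕ} {r : ℝ} (hn : v (f n) = r)
    (hlt : ∀ i < n, (r : WithTop ℝ) < v (f i)) : v (∑ i ∈ range (n + 1), f i) = r := by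
  have hrest : v (f n) < v (∑ i ∈ range n, f i) :=
    hn ▸ v.map_lt_sum WithTop.coe_ne_top fun i hi => hlt i (mem_range.mp hi)
  rw [sum_range_succ, add_comm, v.map_add_eq_of_lt_left hrest, hn]

end AddValuation

namespace WittVector

variable {p : ℕ} [hp : Fact p.Prime] {R : Type*} [CommRing R]

theorem ghostComponent_eq_sum (n : ℕ) (x : WittVector p R) :
    ghostComponent n x = ∑ i ∈ range (n + 1), (p : R) ^ i * x.coeff i ^ p ^ (n - i) := by
  rw [ghostComponent_apply, aeval_wittPolynomial]

theorem ghostComponent_zero_eq_coeff_zero (x : WittVector p R) :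
    ghostComponent 0 x = x.coeff 0 := by
  simp [ghostComponent_eq_sum]

theorem ghostComponent_succ_teichmuller_mul_sub_teichmuller {ζ : R} (hζ : ζ ^ p = 1) (a : R)
    (n : ℕ) : ghostComponent (n + 1) (teichmuller p (ζ * a) - teichmuller p a) = 0 := by
  rw [map_sub, ghostComponent_teichmuller, ghostComponent_teichmuller, mul_pow, pow_succ',
    pow_mul, hζ, one_pow, one_mul, sub_self]

theorem valuation_coeff_of_ghostComponent_succ_eq_zero (v : AddValuation R (WithTop ℝ)) {e : ℝ}
    (he : 0 < e) (hvp : v (p : R) = (((p : ℝ) - 1) * e : ℝ)) {x : WittVector p R}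
    (hx : ∀ n, ghostComponent (n + 1) x = 0) {d : ℝ}
    (h0 : v (x.coeff 0) = ((e + d : ℝ) : WithTop ℝ)) (n : ℕ) :
    v (x.coeff n) = ((e + (p : ℝ) ^ n * d : ℝ) : WithTop ℝ) := by
  induction n using Nat.strong_induction_on with | _ n ih => ?_
  cases n with
  | zero => simpa using h0
  | succ n =>
    have hp1 : (1 : ℝ) < p := by exact_mod_cast hp.out.one_lt
    have hterm : ∀ i ≤ n, v ((p : R) ^ i * x.coeff i ^ p ^ (n + 1 - i)) =
        ((i * ((p - 1) * e) + (p : ℝ) ^ (n + 1 - i) * (e + p ^ i * d) : ℝ) : WithTop ℝ) := by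
      intro i hi
      rw [v.map_mul, v.map_pow_of_eq_coe hvp, v.map_pow_of_eq_coe (ih i (by omega)),
        ← WithTop.coe_add]
      push_cast
      rfl
    have hsum : v (∑ i ∈ range (n + 1), (p : R) ^ i * x.coeff i ^ p ^ (n + 1 - i)) =
        ((n * ((p - 1) * e) + p * (e + p ^ n * d) : ℝ) : WithTop ℝ) := by
      refine v.map_sum_range_succ_of_lt ?_ fun i hi => ?_
      · rw [hterm n le_rfl, Nat.add_sub_cancel_left, pow_one]
      rw [hterm i hi.le, WithTop.coe_lt_coe]
      obtain ⟨k, rfl⟩ := Nat.exists_eq_add_of_lt hi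
      rw [show i + k + 1 + 1 - i = k + 1 + 1 by omega]
      -- the terms in `d` agree; what remains is `e` times the Bernoulli-type bound
      have key := mul_lt_mul_of_pos_left
        (add_mul_sub_one_lt_pow_succ hp1 (Nat.le_add_left 1 k)) he
      simp only [pow_add, pow_succ] at key ⊢
      push_cast at key ⊢
      linarith
    have hlast : (p : R) ^ (n + 1) * x.coeff (n + 1) =
        -∑ i ∈ range (n + 1), (p : R) ^ i * x.coeff i ^ p ^ (n + 1 - i) := by
      have := hx n
      rw [ghostComponent_eq_sum, sum_range_succ, Nat.sub_self, pow_zero, pow_one] at this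
      exact eq_neg_of_add_eq_zero_right this
    rw [← v.map_neg, ← hlast, v.map_mul, v.map_pow_of_eq_coe hvp] at hsum
    rw [WithTop.eq_coe_sub_of_coe_add_eq hsum, WithTop.coe_inj]
    push_cast
    ring

end WittVector

theorem valuation_coeff_teichmuller_sub_general
    (p : ℕ) [hp : Fact p.Prime]
    {O : Type*} [CommRing O]
    (v : O → WithTop ℝ)
    (hvmul : ∀ x y : O, v (x * y) = v x + v y)
    (hvadd : ∀ x y : O, min (v x) (v y) ≤ v (x + y))
    (hvtop : ∀ x : O, v x = ⊤ ↔ x = 0)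
    (wp : ℝ) (hwp : v (p : O) = (wp : ℝ)) (hwp0 : 0 < wp)
    (ζ : O) (hζp : ζ ^ p = 1)
    (hζv : v (ζ - 1) = ((wp / (p - 1) : ℝ) : WithTop ℝ))
    (a : O) (va : ℝ) (hva : v a = (va : ℝ)) :
    ∀ i : ℕ,
      v ((WittVector.teichmuller p (ζ * a) - WittVector.teichmuller p a).coeff i) =
        ((wp / (p - 1) + (p : ℝ) ^ i * va : ℝ) : WithTop ℝ) := by
  have hv1 : v 1 = 0 := by
    have h := hvmul (p : O) 1
    rw [mul_one, hwp, eq_comm] at h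
    simpa using WithTop.eq_coe_sub_of_coe_add_eq h
  let w := AddValuation.of v ((hvtop 0).mpr rfl) hv1 hvadd hvmul
  have hp1 : (0 : ℝ) < p - 1 := sub_pos.mpr (by exact_mod_cast hp.out.one_lt)
  have hvp : w (p : O) = (((p : ℝ) - 1) * (wp / (p - 1)) : ℝ) := by
    rw [mul_div_cancel₀ _ hp1.ne']
    exact hwp
  have h0 : w ((teichmuller p (ζ * a) - teichmuller p a).coeff 0) =
      ((wp / (p - 1) + va : ℝ) : WithTop ℝ) := by
    rw [← ghostComponent_zero_eq_coeff_zero, map_sub, ghostComponent_teichmuller,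
      ghostComponent_teichmuller, pow_zero, pow_one, pow_one, ← sub_one_mul, w.map_mul]
    exact congrArg₂ (· + ·) hζv hva
  exact valuation_coeff_of_ghostComponent_succ_eq_zero w (div_pos hwp0 hp1) hvp
    (ghostComponent_succ_teichmuller_mul_sub_teichmuller hζp a) h0

theorem valuation_coeff_teichmuller_sub
    (p : ℕ) [hp : Fact p.Prime]
    {O : Type*} [CommRing O] [IsDomain O] [CharZero O]
    (v : O → WithTop ℝ)
    (hvmul : ∀ x y : O, v (x * y) = v x + v y)
    (hvadd : ∀ x y : O, min (v x) (v y) ≤ v (x + y))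
    (hvtop : ∀ x : O, v x = ⊤ ↔ x = 0)
    (hvnonneg : ∀ x : O, 0 ≤ v x)
    (wp : ℝ) (hwp : v (p : O) = (wp : ℝ)) (hwp0 : 0 < wp)
    (ζ : O) (hζp : ζ ^ p = 1) (hζ1 : ζ ≠ 1)
    (hζv : v (ζ - 1) = ((wp / (p - 1) : ℝ) : WithTop ℝ))
    (a : O) (ha : a ≠ 0) (va : ℝ) (hva : v a = (va : ℝ)) :
    ∀ i : ℕ,
      v ((WittVector.teichmuller p (ζ * a) - WittVector.teichmuller p a).coeff i) =
        ((wp / (p - 1) + (p : ℝ) ^ i * va : ℝ) : WithTop ℝ) :=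
  valuation_coeff_teichmuller_sub_general p (hp := hp) v hvmul hvadd hvtop wp hwp hwp0 ζ hζp hζv a
    va hva
end

section
/- Let ε ∈ R, let c > 0 be a real number and m ≥ 0 an integer such that p^m·v(ε − 1) > c. Then for every integer j ≥ 0, ([ε] − 1)^{p^{m+j}} belongs to [𝔞_R^{>c}] + p^{j+1}·W(R), where here [𝔞_R^{>c}] denotes the ideal of the full Witt ring W(R) generated by the Teichmüller representatives of elements of R of valuation > c. (This is the key congruence in the proof of Lemma 3.4 of the paper, applied there with v(ε − 1) = ep/(p−1).) -/
/-!
In a perfect ring of characteristic `p`, the kernel of `W(R) → R` is `p W(R)`, so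
`[ε] - 1 = [ε - 1] + x` with `x ∈ p W(R)`. Expanding `([ε - 1] + x)^(p^(m+j))` binomially, each
term contains either `[ε - 1]^(p^m) = [(ε - 1)^(p^m)]`, whose valuation `p^m v(ε - 1)` exceeds `c`,
or `x^(j+1) ∈ p^(j+1) W(R)`, because `p^m + j ≤ p^(m+j)`.
-/

/-- The ideal `[𝔞_R^{>c}]` of the full Witt ring `W(R)`: generated by the Teichmüller
representatives of elements of valuation `> c`. -/
noncomputable def wittIdealGT (p : ℕ) [hp : Fact p.Prime] {R : Type*} [CommRing R]
    (v : R → WithTop ℝ) (c : ℝ) : Ideal (WittVector p R) :=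
  Ideal.span {z | ∃ y : R, (c : WithTop ℝ) < v y ∧ z = WittVector.teichmuller p y}

lemma Nat.pow_add_le_pow_add {p : ℕ} (hp : 1 < p) (m j : ℕ) : p ^ m + j ≤ p ^ (m + j) :=
  calc p ^ m + j ≤ p ^ m * (j + 1) := by nlinarith [Nat.one_le_pow m p (by omega)]
    _ ≤ p ^ m * p ^ j := Nat.mul_le_mul_left _ (Nat.lt_pow_self hp)
    _ = p ^ (m + j) := (pow_add p m j).symm

lemma apply_pow_eq_natCast_mul {M : Type*} [Monoid M] (v : M → WithTop ℝ)
    (hvmul : ∀ x y : M, v (x * y) = v x + v y) (x : M) {n : ℕ} (hn : n ≠ 0) :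
    v (x ^ n) = ((n : ℝ) : WithTop ℝ) * v x := by
  obtain ⟨k, rfl⟩ := Nat.exists_eq_add_one_of_ne_zero hn
  induction k with
  | zero => simp
  | succ k ih =>
    rw [pow_succ, hvmul, ih k.succ_ne_zero]
    cases v x with
    | top => rw [WithTop.add_top, WithTop.mul_top (by exact_mod_cast (k + 1).succ_ne_zero)]
    | coe d =>
      rw [← WithTop.coe_mul, ← WithTop.coe_add, ← WithTop.coe_mul]
      congr 1
      push_cast
      ring

namespace WittVector

variable {p : ℕ} [Fact p.Prime] {R : Type*} [CommRing R]

lemma sub_teichmuller_coeff_zero_mem_span_p [CharP R p] [PerfectRing R p] (x : WittVector p R) :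
    x - teichmuller p (x.coeff 0) ∈ Ideal.span {(p : WittVector p R)} := by
  rw [mem_span_p_iff_coeff_zero_eq_zero, ← constantCoeff_apply, map_sub, constantCoeff_apply,
    constantCoeff_apply, teichmuller_coeff_zero, sub_self]

lemma teichmuller_mem_wittIdealGT (v : R → WithTop ℝ) {c : ℝ} {y : R} (hy : (c : WithTop ℝ) < v y) :
    teichmuller p y ∈ wittIdealGT p v c :=
  Ideal.subset_span ⟨y, hy, rfl⟩

end WittVector

theorem teichmuller_sub_one_pow_mem_general
    (p : ℕ) [hp : Fact p.Prime] {R : Type*} [CommRing R] [CharP R p] [PerfectRing R p]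
    (v : R → WithTop ℝ)
    (hvmul : ∀ x y : R, v (x * y) = v x + v y)
    (ε : R) (c : ℝ) (m : ℕ)
    (hm : (c : WithTop ℝ) < (((p : ℝ) ^ m : ℝ) : WithTop ℝ) * v (ε - 1)) :
    ∀ j : ℕ,
      (WittVector.teichmuller p ε - 1) ^ (p ^ (m + j)) ∈
        wittIdealGT p v c + Ideal.span {((p : WittVector p R)) ^ (j + 1)} := by
  intro j
  set x : WittVector p R := WittVector.teichmuller p ε - 1 - WittVector.teichmuller p (ε - 1)
  have hx : x ∈ Ideal.span {(p : WittVector p R)} := by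
    convert WittVector.sub_teichmuller_coeff_zero_mem_span_p (WittVector.teichmuller p ε - 1)
    rw [← WittVector.constantCoeff_apply, map_sub, map_one, WittVector.constantCoeff_apply,
      WittVector.teichmuller_coeff_zero]
  have hlead : WittVector.teichmuller p (ε - 1) ^ p ^ m ∈ wittIdealGT p v c := by
    rw [← map_pow]
    refine WittVector.teichmuller_mem_wittIdealGT v ?_
    rwa [apply_pow_eq_natCast_mul v hvmul _ (pow_ne_zero m hp.out.ne_zero), Nat.cast_pow]
  have hcorr : x ^ (j + 1) ∈ Ideal.span {(p : WittVector p R) ^ (j + 1)} := by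
    rw [← Ideal.span_singleton_pow]
    exact Ideal.pow_mem_pow hx _
  rw [show WittVector.teichmuller p ε - 1 = WittVector.teichmuller p (ε - 1) + x by ring,
    Submodule.add_eq_sup]
  exact Ideal.add_pow_mem_of_pow_mem_of_le _ (Ideal.mem_sup_left hlead) (Ideal.mem_sup_right hcorr)
    (by have := Nat.pow_add_le_pow_add hp.out.one_lt m j; omega)

theorem teichmuller_sub_one_pow_mem
    (p : ℕ) [hp : Fact p.Prime] {R : Type*} [CommRing R] [CharP R p] [PerfectRing R p]
    (v : R → WithTop ℝ)
    (hv0 : v 0 = ⊤)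
    (hvmul : ∀ x y : R, v (x * y) = v x + v y)
    (hvadd : ∀ x y : R, min (v x) (v y) ≤ v (x + y))
    (hvnonneg : ∀ x : R, 0 ≤ v x)
    (ε : R) (c : ℝ) (hc : 0 < c) (m : ℕ)
    (hm : (c : WithTop ℝ) < (((p : ℝ) ^ m : ℝ) : WithTop ℝ) * v (ε - 1)) :
    ∀ j : ℕ,
      (WittVector.teichmuller p ε - 1) ^ (p ^ (m + j)) ∈
        wittIdealGT p v c + Ideal.span {((p : WittVector p R)) ^ (j + 1)} :=
  teichmuller_sub_one_pow_mem_general p (hp := hp) v hvmul ε c m hm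
end

section
/- Let G be a group and let 𝒞 be a class of lattice representations of G which is stable under subobjects and under direct sums (and closed under isomorphism). Assume that every finitely generated ℤ_p[G]-module killed by p admits a surjective G-equivariant ℤ_p-linear map from some member of 𝒞. Then for every n ≥ 1, every finitely generated ℤ_p[G]-module T killed by p^n admits a surjective G-equivariant ℤ_p-linear map from some member of 𝒞; consequently T is isomorphic, as a ℤ_p[G]-module, to L/L′ for some L ∈ 𝒞 and some G-stable submodule L′ ⊆ L with L′ ∈ 𝒞. -/
/-!
Induct on `n` in a stronger form: if `Z` has an equivariant map `j` to a member `L₁` of `𝒞`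
whose kernel is killed by `p ^ n`, then `Z` lifts. For `n = 0` the map `j` is injective, so `Z`
is a lattice and a subobject of `L₁`. For the inductive step, lift `Z / pZ` by `u : L₀ → Z / pZ`
and pass to the fibre product `W = L₀ ×_{Z/pZ} Z`, which surjects onto `Z`: the map
`W → L₀ ⊕ L₁, (x, z) ↦ (x, j z)` has kernel killed by `p ^ (n - 1)`, since `L₁` has no
`p`-torsion. The theorem is the case of the zero map from `T` to a member of `𝒞` (one exists as
the zero module lifts), and the kernel of a lift `L → T` is a sublattice of `L`, hence in `𝒞`.
-/

universe u

/-- A lattice representation of `G`: a finitely generated free `ℤ_p`-module with a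
`ℤ_p`-linear action of `G`. -/
structure LatRep (p : ℕ) [Fact p.Prime] (G : Type u) [Group G] : Type (u + 1) where
  M : Type u
  [acg : AddCommGroup M]
  [mod : Module ℤ_[p] M]
  [act : DistribMulAction G M]
  [smulComm : SMulCommClass G ℤ_[p] M]
  [free : Module.Free ℤ_[p] M]
  [fin : Module.Finite ℤ_[p] M]

attribute [instance] LatRep.acg LatRep.mod LatRep.act LatRep.smulComm LatRep.free LatRep.fin

open Function

namespace Submodule

variable {R G M : Type*} [Monoid G]

section Restrict

variable [Semiring R] [AddCommMonoid M] [Module R M] [DistribMulAction G M]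

abbrev distribMulActionOfStable (W : Submodule R M) (hW : ∀ (g : G), ∀ x ∈ W, g • x ∈ W) :
    DistribMulAction G W :=
  letI : SMul G W := ⟨fun g w => ⟨g • (w : M), hW g w w.2⟩⟩
  Subtype.coe_injective.distribMulAction W.subtype.toAddMonoidHom fun _ _ => rfl

theorem smulCommClass_of_stable [SMulCommClass G R M] (W : Submodule R M)
    (hW : ∀ (g : G), ∀ x ∈ W, g • x ∈ W) :
    letI := W.distribMulActionOfStable hW
    SMulCommClass G R W :=
  letI := W.distribMulActionOfStable hW
  ⟨fun g r w => Subtype.ext (smul_comm g r (w : M))⟩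

end Restrict

section Quotient

variable [Ring R] [AddCommGroup M] [Module R M] [DistribMulAction G M] [SMulCommClass G R M]

abbrev quotientDistribMulActionOfStable (N : Submodule R M)
    (hN : ∀ (g : G), ∀ x ∈ N, g • x ∈ N) : DistribMulAction G (M ⧸ N) :=
  letI : SMul G (M ⧸ N) :=
    ⟨fun g => N.mapQ N (DistribSMul.toLinearMap R M g) fun x hx => hN g x hx⟩
  N.mkQ_surjective.distribMulAction N.mkQ.toAddMonoidHom fun _ _ => rfl

theorem quotient_smulCommClass_of_stable (N : Submodule R M)
    (hN : ∀ (g : G), ∀ x ∈ N, g • x ∈ N) :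
    letI := N.quotientDistribMulActionOfStable hN
    SMulCommClass G R (M ⧸ N) :=
  letI := N.quotientDistribMulActionOfStable hN
  ⟨fun g r x => by
    obtain ⟨x, rfl⟩ := N.mkQ_surjective x
    exact congrArg (Submodule.Quotient.mk (p := N)) (smul_comm g r x)⟩

end Quotient

end Submodule

namespace LinearMap

variable {R G M N : Type*} [Monoid G] [Semiring R] [AddCommMonoid M] [Module R M]
  [DistribMulAction G M] [AddCommMonoid N] [Module R N] [DistribMulAction G N]
  {f f' : M →ₗ[R] N}

theorem smul_mem_eqLocus (hf : ∀ (g : G) (x : M), f (g • x) = g • f x)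
    (hf' : ∀ (g : G) (x : M), f' (g • x) = g • f' x) (g : G) (x : M) (hx : x ∈ f.eqLocus f') :
    g • x ∈ f.eqLocus f' := by
  rw [mem_eqLocus] at hx ⊢
  rw [hf, hf', hx]

theorem smul_mem_ker (hf : ∀ (g : G) (x : M), f (g • x) = g • f x) (g : G) (x : M)
    (hx : x ∈ ker f) : g • x ∈ ker f := by
  rw [mem_ker] at hx ⊢
  rw [hf, hx, smul_zero]

theorem smul_mem_range (hf : ∀ (g : G) (x : M), f (g • x) = g • f x) (g : G) (y : N)
    (hy : y ∈ range f) : g • y ∈ range f := by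
  obtain ⟨x, rfl⟩ := hy
  exact ⟨g • x, hf g x⟩

end LinearMap

section LinearAlgebra

variable {R M N Q : Type*} [CommRing R] [AddCommGroup M] [Module R M] [AddCommGroup N]
  [Module R N] [AddCommGroup Q] [Module R Q]

theorem smul_eq_zero_of_quotient_range_lsmul (π : R)
    (x : M ⧸ LinearMap.range (LinearMap.lsmul R M π)) : π • x = 0 := by
  obtain ⟨y, rfl⟩ := Submodule.mkQ_surjective _ x
  rw [← map_smul, Submodule.mkQ_apply, Submodule.Quotient.mk_eq_zero]
  exact ⟨y, rfl⟩

theorem surjective_snd_comp_subtype_eqLocus {f : M →ₗ[R] Q} (hf : Surjective f) (g : N →ₗ[R] Q) :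
    Surjective (LinearMap.snd R M N ∘ₗ
      (LinearMap.eqLocus (f ∘ₗ LinearMap.fst R M N) (g ∘ₗ LinearMap.snd R M N)).subtype) := by
  intro z
  obtain ⟨x, hx⟩ := hf (g z)
  exact ⟨⟨(x, z), hx⟩, rfl⟩

variable {P : Type*} [AddCommGroup P] [Module R P]

theorem pow_smul_eq_zero_of_mem_eqLocus {π : R} (hπ : IsSMulRegular N π)
    (u : P →ₗ[R] M ⧸ LinearMap.range (LinearMap.lsmul R M π)) {j : M →ₗ[R] N} {n : ℕ}
    (hj : ∀ z, j z = 0 → π ^ (n + 1) • z = 0) {w : P × M}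
    (hw : w ∈ LinearMap.eqLocus (u ∘ₗ LinearMap.fst R P M) (Submodule.mkQ _ ∘ₗ LinearMap.snd R P M))
    (h0 : LinearMap.prodMap LinearMap.id j w = 0) : π ^ n • w = 0 := by
  have hx : w.1 = 0 := congrArg Prod.fst h0
  have hjz : j w.2 = 0 := congrArg Prod.snd h0
  obtain ⟨z, hz⟩ : w.2 ∈ LinearMap.range (LinearMap.lsmul R M π) :=
    (Submodule.Quotient.mk_eq_zero _).mp (by simpa [hx] using (LinearMap.mem_eqLocus.mp hw).symm)
  rw [← hz, LinearMap.lsmul_apply] at hjz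
  have hjz' : j z = 0 := hπ (show π • j z = π • 0 by rwa [smul_zero, ← map_smul])
  refine Prod.ext (by simp [hx]) ?_
  simpa [← hz, smul_smul, ← pow_succ] using hj z hjz'

end LinearAlgebra

namespace LatRep

variable {p : ℕ} [Fact p.Prime] {G : Type u} [Group G]

def IsStableUnderSubobjects (C : Set (LatRep p G)) : Prop :=
  ∀ L ∈ C, ∀ L' : LatRep p G, ∀ f : L'.M →ₗ[ℤ_[p]] L.M,
    (∀ (g : G) (x : L'.M), f (g • x) = g • f x) → Injective f → L' ∈ C

def IsStableUnderSums (C : Set (LatRep p G)) : Prop :=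
  ∀ L₁ ∈ C, ∀ L₂ ∈ C, ∀ L' : LatRep p G, ∀ f : L'.M →ₗ[ℤ_[p]] (L₁.M × L₂.M),
    (∀ (g : G) (x : L'.M), f (g • x) = g • f x) → Bijective f → L' ∈ C

def HasLift (C : Set (LatRep p G)) (T : Type u) [AddCommGroup T] [Module ℤ_[p] T]
    [DistribMulAction G T] : Prop :=
  ∃ L ∈ C, ∃ f : L.M →ₗ[ℤ_[p]] T, (∀ (g : G) (x : L.M), f (g • x) = g • f x) ∧ Surjective f

noncomputable def prod (L₁ L₂ : LatRep p G) : LatRep p G where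
  M := L₁.M × L₂.M

theorem prod_mem {C : Set (LatRep p G)} (hC : IsStableUnderSums C) {L₁ L₂ : LatRep p G}
    (h₁ : L₁ ∈ C) (h₂ : L₂ ∈ C) : L₁.prod L₂ ∈ C :=
  hC L₁ h₁ L₂ h₂ _ LinearMap.id (fun _ _ => rfl) bijective_id

theorem HasLift.of_surjective {C : Set (LatRep p G)} {W Z : Type u} [AddCommGroup W]
    [Module ℤ_[p] W] [DistribMulAction G W] [AddCommGroup Z] [Module ℤ_[p] Z]
    [DistribMulAction G Z] (hW : HasLift C W) (q : W →ₗ[ℤ_[p]] Z)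
    (hqG : ∀ (g : G) (w : W), q (g • w) = g • q w) (hq : Surjective q) : HasLift C Z := by
  obtain ⟨L, hL, f, hfG, hf⟩ := hW
  exact ⟨L, hL, q ∘ₗ f, fun g x => by simp [hfG, hqG], hq.comp hf⟩

variable {Z : Type u} [AddCommGroup Z] [Module ℤ_[p] Z] [DistribMulAction G Z]
  [SMulCommClass G ℤ_[p] Z] [Module.Finite ℤ_[p] Z]

/-- Being embedded in a lattice, `Z` is torsion-free, hence free over the PID `ℤ_[p]`. -/
def ofInjective (L : LatRep p G) (j : Z →ₗ[ℤ_[p]] L.M) (hj : Injective j) : LatRep p G :=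
  haveI := hj.moduleIsTorsionFree j (map_smul j)
  { M := Z }

theorem ofInjective_mem {C : Set (LatRep p G)} (hC : IsStableUnderSubobjects C) {L : LatRep p G}
    (hL : L ∈ C) (j : Z →ₗ[ℤ_[p]] L.M) (hjG : ∀ (g : G) (z : Z), j (g • z) = g • j z)
    (hj : Injective j) : ofInjective L j hj ∈ C :=
  hC L hL _ j hjG hj

theorem hasLift_of_injective {C : Set (LatRep p G)} (hC : IsStableUnderSubobjects C)
    {L : LatRep p G} (hL : L ∈ C) (j : Z →ₗ[ℤ_[p]] L.M)
    (hjG : ∀ (g : G) (z : Z), j (g • z) = g • j z) (hj : Injective j) : HasLift C Z :=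
  ⟨ofInjective L j hj, ofInjective_mem hC hL j hjG hj, LinearMap.id, fun _ _ => rfl,
    surjective_id⟩

theorem hasLift_of_ker_pow_smul_eq_zero {C : Set (LatRep p G)} (hsub : IsStableUnderSubobjects C)
    (hsum : IsStableUnderSums C)
    (hlift : ∀ (T : Type u) [AddCommGroup T] [Module ℤ_[p] T] [DistribMulAction G T]
      [SMulCommClass G ℤ_[p] T] [Module.Finite ℤ_[p] T],
      (∀ x : T, (p : ℤ_[p]) • x = 0) → HasLift C T)
    (n : ℕ) {L₁ : LatRep p G} (hL₁ : L₁ ∈ C) (j : Z →ₗ[ℤ_[p]] L₁.M)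
    (hjG : ∀ (g : G) (z : Z), j (g • z) = g • j z)
    (hj : ∀ z, j z = 0 → (p : ℤ_[p]) ^ n • z = 0) : HasLift C Z := by
  induction n generalizing Z L₁ with
  | zero =>
    refine hasLift_of_injective hsub hL₁ j hjG ((injective_iff_map_eq_zero j).mpr fun z hz => ?_)
    simpa using hj z hz
  | succ n ih =>
    let N := LinearMap.range (LinearMap.lsmul ℤ_[p] Z p)
    have hN : ∀ (g : G), ∀ z ∈ N, g • z ∈ N :=
      LinearMap.smul_mem_range fun g z => (smul_comm g (p : ℤ_[p]) z).symm
    let := N.quotientDistribMulActionOfStable hN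
    have := N.quotient_smulCommClass_of_stable hN
    obtain ⟨L₀, hL₀, u, huG, hu⟩ := hlift (Z ⧸ N) (smul_eq_zero_of_quotient_range_lsmul _)
    let W := LinearMap.eqLocus (u ∘ₗ LinearMap.fst _ _ _) (N.mkQ ∘ₗ LinearMap.snd _ _ _)
    have hW : ∀ (g : G), ∀ w ∈ W, g • w ∈ W :=
      LinearMap.smul_mem_eqLocus (fun g w => huG g w.1) fun _ _ => rfl
    let := W.distribMulActionOfStable hW
    have := W.smulCommClass_of_stable hW
    have hp : IsSMulRegular L₁.M (p : ℤ_[p]) :=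
      IsSMulRegular.of_ne_zero (Nat.cast_ne_zero.mpr (Fact.out : p.Prime).ne_zero)
    have hWlift : HasLift C W :=
      ih (prod_mem hsum hL₀ hL₁) ((LinearMap.id.prodMap j) ∘ₗ W.subtype)
        (fun g w => Prod.ext rfl (hjG g w.1.2))
        fun w h0 => Subtype.ext (pow_smul_eq_zero_of_mem_eqLocus hp u hj w.2 h0)
    exact hWlift.of_surjective _ (fun _ _ => rfl) (surjective_snd_comp_subtype_eqLocus hu _)

theorem exists_ker_eq_range_of_hasLift {C : Set (LatRep p G)} (hsub : IsStableUnderSubobjects C)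
    {T : Type u} [AddCommGroup T] [Module ℤ_[p] T] [DistribMulAction G T] (hT : HasLift C T) :
    ∃ L ∈ C, ∃ L' ∈ C, ∃ ι : L'.M →ₗ[ℤ_[p]] L.M, ∃ f : L.M →ₗ[ℤ_[p]] T,
      (∀ (g : G) (x : L'.M), ι (g • x) = g • ι x) ∧ Injective ι ∧
      (∀ (g : G) (x : L.M), f (g • x) = g • f x) ∧ Surjective f ∧
      LinearMap.ker f = LinearMap.range ι := by
  obtain ⟨L, hL, f, hfG, hf⟩ := hT
  have hK := LinearMap.smul_mem_ker hfG
  let := (LinearMap.ker f).distribMulActionOfStable hK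
  have := (LinearMap.ker f).smulCommClass_of_stable hK
  have hι := (LinearMap.ker f).injective_subtype
  exact ⟨L, hL, ofInjective L _ hι, ofInjective_mem hsub hL _ (fun _ _ => rfl) hι,
    (LinearMap.ker f).subtype, f, fun _ _ => rfl, hι, hfG, hf, (Submodule.range_subtype _).symm⟩

end LatRep

theorem lift_of_torsion_of_lift_of_p_torsion_general
    (p : ℕ) [Fact p.Prime] (G : Type u) [Group G]
    (C : Set (LatRep p G))
    -- `𝒞` is stable under subobjects (and closed under isomorphism): any lattice
    -- representation admitting an injective equivariant map into a member of `𝒞`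
    -- belongs to `𝒞`.
    (hsub : ∀ L ∈ C, ∀ L' : LatRep p G, ∀ f : L'.M →ₗ[ℤ_[p]] L.M,
      (∀ (g : G) (x : L'.M), f (g • x) = g • f x) → Function.Injective f → L' ∈ C)
    -- `𝒞` is stable under direct sums: any lattice representation equivariantly
    -- isomorphic to the direct sum of two members of `𝒞` belongs to `𝒞`.
    (hsum : ∀ L₁ ∈ C, ∀ L₂ ∈ C, ∀ L' : LatRep p G,
      ∀ f : L'.M →ₗ[ℤ_[p]] (L₁.M × L₂.M),
      (∀ (g : G) (x : L'.M), f (g • x) = g • f x) → Function.Bijective f → L' ∈ C)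
    -- every finitely generated `ℤ_p[G]`-module killed by `p` admits a lift from `𝒞`
    (hlift : ∀ (T : Type u) [AddCommGroup T] [Module ℤ_[p] T] [DistribMulAction G T]
      [SMulCommClass G ℤ_[p] T] [Module.Finite ℤ_[p] T],
      (∀ x : T, (p : ℤ_[p]) • x = 0) →
      ∃ L ∈ C, ∃ f : L.M →ₗ[ℤ_[p]] T,
        (∀ (g : G) (x : L.M), f (g • x) = g • f x) ∧ Function.Surjective f)
    (n : ℕ)
    (T : Type u) [AddCommGroup T] [Module ℤ_[p] T] [DistribMulAction G T]
    [SMulCommClass G ℤ_[p] T] [Module.Finite ℤ_[p] T]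
    (hT : ∀ x : T, ((p : ℤ_[p]) ^ n) • x = 0) :
    (∃ L ∈ C, ∃ f : L.M →ₗ[ℤ_[p]] T,
      (∀ (g : G) (x : L.M), f (g • x) = g • f x) ∧ Function.Surjective f) ∧
    (∃ L ∈ C, ∃ L' ∈ C, ∃ ι : L'.M →ₗ[ℤ_[p]] L.M, ∃ f : L.M →ₗ[ℤ_[p]] T,
      (∀ (g : G) (x : L'.M), ι (g • x) = g • ι x) ∧ Function.Injective ι ∧
      (∀ (g : G) (x : L.M), f (g • x) = g • f x) ∧ Function.Surjective f ∧
      LinearMap.ker f = LinearMap.range ι) := by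
  obtain ⟨L₁, hL₁, -⟩ := hlift PUnit.{u + 1} fun _ => Subsingleton.elim _ _
  have hTlift : LatRep.HasLift C T :=
    LatRep.hasLift_of_ker_pow_smul_eq_zero hsub hsum hlift n hL₁ 0 (fun _ _ => by simp)
      fun z _ => hT z
  exact ⟨hTlift, LatRep.exists_ker_eq_range_of_hasLift hsub hTlift⟩

theorem lift_of_torsion_of_lift_of_p_torsion
    (p : ℕ) [Fact p.Prime] (G : Type u) [Group G]
    (C : Set (LatRep p G))
    -- `𝒞` is stable under subobjects (and closed under isomorphism): any lattice
    -- representation admitting an injective equivariant map into a member of `𝒞`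
    -- belongs to `𝒞`.
    (hsub : ∀ L ∈ C, ∀ L' : LatRep p G, ∀ f : L'.M →ₗ[ℤ_[p]] L.M,
      (∀ (g : G) (x : L'.M), f (g • x) = g • f x) → Function.Injective f → L' ∈ C)
    -- `𝒞` is stable under direct sums: any lattice representation equivariantly
    -- isomorphic to the direct sum of two members of `𝒞` belongs to `𝒞`.
    (hsum : ∀ L₁ ∈ C, ∀ L₂ ∈ C, ∀ L' : LatRep p G,
      ∀ f : L'.M →ₗ[ℤ_[p]] (L₁.M × L₂.M),
      (∀ (g : G) (x : L'.M), f (g • x) = g • f x) → Function.Bijective f → L' ∈ C)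
    -- every finitely generated `ℤ_p[G]`-module killed by `p` admits a lift from `𝒞`
    (hlift : ∀ (T : Type u) [AddCommGroup T] [Module ℤ_[p] T] [DistribMulAction G T]
      [SMulCommClass G ℤ_[p] T] [Module.Finite ℤ_[p] T],
      (∀ x : T, (p : ℤ_[p]) • x = 0) →
      ∃ L ∈ C, ∃ f : L.M →ₗ[ℤ_[p]] T,
        (∀ (g : G) (x : L.M), f (g • x) = g • f x) ∧ Function.Surjective f)
    (n : ℕ) (hn : 1 ≤ n)
    (T : Type u) [AddCommGroup T] [Module ℤ_[p] T] [DistribMulAction G T]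
    [SMulCommClass G ℤ_[p] T] [Module.Finite ℤ_[p] T]
    (hT : ∀ x : T, ((p : ℤ_[p]) ^ n) • x = 0) :
    (∃ L ∈ C, ∃ f : L.M →ₗ[ℤ_[p]] T,
      (∀ (g : G) (x : L.M), f (g • x) = g • f x) ∧ Function.Surjective f) ∧
    (∃ L ∈ C, ∃ L' ∈ C, ∃ ι : L'.M →ₗ[ℤ_[p]] L.M, ∃ f : L.M →ₗ[ℤ_[p]] T,
      (∀ (g : G) (x : L'.M), ι (g • x) = g • ι x) ∧ Function.Injective ι ∧
      (∀ (g : G) (x : L.M), f (g • x) = g • f x) ∧ Function.Surjective f ∧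
      LinearMap.ker f = LinearMap.range ι) :=
  lift_of_torsion_of_lift_of_p_torsion_general p G C hsub hsum hlift n T hT
end

section
/- Let M be a finite-dimensional F-vector space of dimension d, and let φ_M : M → M be an additive map which is semilinear over the Frobenius of F (φ_M(λ·x) = λ^p·φ_M(x) for λ ∈ F, x ∈ M) and such that the F-span of φ_M(M) is all of M (M is an étale φ-module). Then there exists a free k[[u]]-submodule 𝔐 ⊆ M of rank d which spans M over F, satisfies φ_M(𝔐) ⊆ 𝔐, and for which there exists an integer N ≥ 0 with u^N·𝔐 contained in the k[[u]]-submodule generated by φ_M(𝔐). (This is the key step in Proposition 5.4 of the paper: every étale φ-module over k((u)) contains a lattice which is a Kisin module of finite height.) -/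
/-!
Choose an `F`-basis `b` of `M`. By étaleness `φ(b)` also spans `M`, so the coordinates of
each family in terms of the other have bounded denominators: `u^a φ(bᵢ)` and `u^m bⱼ` lie in the
`k[[u]]`-spans of `b` and of `φ(b)` respectively. For the rescaled basis `e = u^a b` one gets
`φ(eᵢ) = u^{ap} φ(bᵢ) ∈ u^{a(p-2)} · span e`, which is inside `span e` because `p ≥ 2`, and
`u^{ap+m} eⱼ` lies in the span of `φ(e)`.
-/

open Submodule Set

theorem AddMonoidHom.map_mem_of_mem_span {R M M' : Type*} [Semiring R] [AddCommMonoid M]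
    [Module R M] [AddCommMonoid M'] [Module R M'] (φ : M →+ M') (σ : R → R)
    (hφ : ∀ (r : R) (x : M), φ (r • x) = σ r • φ x) {s : Set M} {P : Submodule R M'}
    (hs : ∀ x ∈ s, φ x ∈ P) {x : M} (hx : x ∈ span R s) : φ x ∈ P := by
  induction hx using span_induction with
  | mem y hy => exact hs y hy
  | zero => simp
  | add y z _ _ hy hz => rw [map_add]; exact add_mem hy hz
  | smul r y _ hy => rw [hφ]; exact P.smul_mem _ hy

theorem smul_mem_span_smul_range {R M ι : Type*} [CommSemiring R] [AddCommMonoid M] [Module R M]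
    (t : R) (b : ι → M) {x : M} (hx : x ∈ span R (range b)) : t • x ∈ span R (range (t • b)) :=
  (DistribSMul.toAddMonoidHom M t).map_mem_of_mem_span id (fun r y => smul_comm t r y)
    (by rintro _ ⟨i, rfl⟩; exact subset_span ⟨i, rfl⟩) hx

theorem IsLocalization.exists_forall_smul_mem_span {R R' N ι : Type*} [CommSemiring R]
    (S : Submonoid R) [CommSemiring R'] [Algebra R R'] [IsLocalization S R'] [AddCommMonoid N]
    [Module R N] [Module R' N] [IsScalarTower R R' N] [Fintype ι] (s : Set N) (v : ι → N)
    (hv : ∀ i, v i ∈ span R' s) : ∃ t : S, ∀ i, t • v i ∈ span R s := by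
  choose t ht using fun i => multiple_mem_span_of_mem_localization_span S R' s (v i) (hv i)
  refine ⟨∏ i, t i, fun i => ?_⟩
  obtain ⟨c, hc⟩ := Finset.dvd_prod_of_mem t (Finset.mem_univ i)
  rw [hc, mul_comm, mul_smul]
  exact smul_of_tower_mem _ c (ht i)

theorem IsLocalization.exists_pow_smul_mem_span {R R' N ι : Type*} [CommSemiring R] (x : R)
    [CommSemiring R'] [Algebra R R'] [IsLocalization.Away x R'] [AddCommMonoid N] [Module R N]
    [Module R' N] [IsScalarTower R R' N] [Fintype ι] (s : Set N) (v : ι → N)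
    (hv : ∀ i, v i ∈ span R' s) : ∃ n : ℕ, ∀ i, x ^ n • v i ∈ span R s := by
  obtain ⟨⟨_, n, rfl⟩, ht⟩ := exists_forall_smul_mem_span (Submonoid.powers x) s v hv
  exact ⟨n, ht⟩

section Lattice

variable {R M ι : Type*} [CommSemiring R] [AddCommMonoid M] [Module R M] {p : ℕ} (φ : M →+ M)
  (hφ : ∀ (r : R) (x : M), φ (r • x) = r ^ p • φ x) (t : R) (b : ι → M)
include hφ

theorem map_mem_span_smul_range (hp : 2 ≤ p) (h : ∀ i, t • φ (b i) ∈ span R (range b))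
    {x : M} (hx : x ∈ span R (range (t • b))) : φ x ∈ span R (range (t • b)) := by
  refine φ.map_mem_of_mem_span (· ^ p) hφ ?_ hx
  rintro _ ⟨i, rfl⟩
  have hpow : t ^ p = t ^ (p - 2) * t * t := by
    rw [mul_assoc, ← sq, ← pow_add, Nat.sub_add_cancel hp]
  rw [Pi.smul_apply, hφ, hpow, mul_smul, mul_smul]
  exact smul_mem _ _ (smul_mem_span_smul_range t b (h i))

theorem smul_mem_span_map_smul_range (c : R) (h : ∀ i, c • b i ∈ span R (range (φ ∘ b)))
    {x : M} (hx : x ∈ span R (range (t • b))) :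
    (t ^ p * c) • x ∈ span R (φ '' span R (range (t • b))) := by
  have hφt : ∀ y ∈ span R (range (φ ∘ b)), t ^ p • y ∈ span R (φ '' span R (range (t • b))) :=
    fun y hy => (DistribSMul.toAddMonoidHom M (t ^ p)).map_mem_of_mem_span id
      (fun r z => smul_comm _ r z)
      (by
        rintro _ ⟨i, rfl⟩
        exact subset_span ⟨t • b i, subset_span ⟨i, rfl⟩, by simp [hφ]⟩) hy
  refine (DistribSMul.toAddMonoidHom M (t ^ p * c)).map_mem_of_mem_span id
    (fun r z => smul_comm _ r z) ?_ hx
  rintro _ ⟨i, rfl⟩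
  simp only [DistribSMul.toAddMonoidHom_apply, Pi.smul_apply]
  rw [smul_comm, mul_smul]
  exact smul_mem _ _ (hφt _ (h i))

end Lattice

theorem exists_kisin_lattice_of_etale_general
    (p : ℕ) [hp : Fact p.Prime] (k : Type*) [Field k]
    (M : Type*) [AddCommGroup M] [Module (LaurentSeries k) M]
    [FiniteDimensional (LaurentSeries k) M]
    (d : ℕ) (hd : Module.finrank (LaurentSeries k) M = d)
    (φM : M →+ M)
    (hsemi : ∀ (lam : LaurentSeries k) (x : M), φM (lam • x) = (lam ^ p) • φM x)
    (hetale : Submodule.span (LaurentSeries k) (Set.range φM) = ⊤) :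
    -- view `M` as a `k[[u]]`-module via the inclusion `k[[u]] ⊆ k((u))`
    letI : Module (PowerSeries k) M :=
      Module.compHom M (algebraMap (PowerSeries k) (LaurentSeries k))
    ∃ (𝔐 : Submodule (PowerSeries k) M) (_ : Module.Basis (Fin d) (PowerSeries k) 𝔐),
      Submodule.span (LaurentSeries k) (𝔐 : Set M) = ⊤ ∧
      (∀ x ∈ 𝔐, φM x ∈ 𝔐) ∧
      ∃ N : ℕ, ∀ x ∈ 𝔐, ((PowerSeries.X : PowerSeries k) ^ N) • x ∈
        Submodule.span (PowerSeries k) (φM '' (𝔐 : Set M)) := by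
  let _ : Module (PowerSeries k) M :=
    Module.compHom M (algebraMap (PowerSeries k) (LaurentSeries k))
  have : IsScalarTower (PowerSeries k) (LaurentSeries k) M := .of_compHom _ _ _
  have hφR (r : PowerSeries k) (x : M) : φM (r • x) = r ^ p • φM x := by
    rw [← algebraMap_smul (LaurentSeries k), hsemi, ← map_pow, algebraMap_smul]
  let b := Module.finBasisOfFinrankEq (LaurentSeries k) M hd
  have hφb : span (LaurentSeries k) (range (φM ∘ b)) = ⊤ := by
    refine eq_top_iff.2 (hetale ▸ span_le.2 ?_)
    rintro _ ⟨x, rfl⟩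
    exact φM.map_mem_of_mem_span (· ^ p) hsemi (by rintro _ ⟨i, rfl⟩; exact subset_span ⟨i, rfl⟩)
      (b.mem_span x)
  obtain ⟨a, ha⟩ := IsLocalization.exists_pow_smul_mem_span (PowerSeries.X : PowerSeries k)
    (range b) (φM ∘ b) fun i => b.span_eq ▸ mem_top
  obtain ⟨m, hm⟩ := IsLocalization.exists_pow_smul_mem_span (PowerSeries.X : PowerSeries k)
    (range (φM ∘ b)) b fun i => hφb ▸ mem_top
  set t := (PowerSeries.X : PowerSeries k) ^ a
  have ht : algebraMap (PowerSeries k) (LaurentSeries k) t ≠ 0 :=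
    (map_ne_zero_iff _ (FaithfulSMul.algebraMap_injective _ _)).2
      (pow_ne_zero _ PowerSeries.X_ne_zero)
  let e := b.unitsSMul fun _ => Units.mk0 _ ht
  have he : ⇑e = t • ⇑b := funext fun i => by
    simp only [e, Module.Basis.unitsSMul_apply, Units.smul_mk0, Pi.smul_apply]
    exact algebraMap_smul _ t (b i)
  refine ⟨span (PowerSeries k) (range e), .span (e.linearIndependent.restrict_scalars' _),
    by rw [span_span_of_tower, e.span_eq], fun x hx => ?_, a * p + m, fun x hx => ?_⟩
  · rw [he] at hx ⊢
    exact map_mem_span_smul_range φM hφR t b hp.out.two_le ha hx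
  · rw [he] at hx ⊢
    rw [pow_add, pow_mul]
    exact smul_mem_span_map_smul_range φM hφR t b _ hm hx

theorem exists_kisin_lattice_of_etale
    (p : ℕ) [hp : Fact p.Prime] (k : Type*) [Field k] [CharP k p] [PerfectRing k p]
    (M : Type*) [AddCommGroup M] [Module (LaurentSeries k) M]
    [FiniteDimensional (LaurentSeries k) M]
    (d : ℕ) (hd : Module.finrank (LaurentSeries k) M = d)
    (φM : M →+ M)
    (hsemi : ∀ (lam : LaurentSeries k) (x : M), φM (lam • x) = (lam ^ p) • φM x)
    (hetale : Submodule.span (LaurentSeries k) (Set.range φM) = ⊤) :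
    -- view `M` as a `k[[u]]`-module via the inclusion `k[[u]] ⊆ k((u))`
    letI : Module (PowerSeries k) M :=
      Module.compHom M (algebraMap (PowerSeries k) (LaurentSeries k))
    ∃ (𝔐 : Submodule (PowerSeries k) M) (_ : Module.Basis (Fin d) (PowerSeries k) 𝔐),
      Submodule.span (LaurentSeries k) (𝔐 : Set M) = ⊤ ∧
      (∀ x ∈ 𝔐, φM x ∈ 𝔐) ∧
      ∃ N : ℕ, ∀ x ∈ 𝔐, ((PowerSeries.X : PowerSeries k) ^ N) • x ∈
        Submodule.span (PowerSeries k) (φM '' (𝔐 : Set M)) :=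
  exists_kisin_lattice_of_etale_general p (hp := hp) k M d hd φM hsemi hetale
end
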